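/- arXiv:1307.0111 — 6 statements merged into one kernel-verified Lean document; each statement's English description precedes it below -/
import Mathlib

section
/- Let 𝔽 be ℝ or ℂ, let 𝒰 be a nonprincipal ultrafilter on ℕ, and let X be an infinite-dimensional normed space over 𝔽 such that the dual X* contains an isometric copy of ℓ¹, i.e. there is a sequence (e_n*) in X* with ‖Σ_{n≤m} r_n e_n*‖ = Σ_{n≤m}|r_n| for every m and all scalars r_1,…,r_m ∈ 𝔽. Then the canonical linear isometry j : (X*)^𝒰 → (X^𝒰)* is not surjective. -/
/-!
Ultrapowers of normed spaces along a nonprincipal ultrafilter `𝒰` on `ℕ`.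

`BoundedSeq X = ℓ∞(X)` is the normed space of bounded sequences in `X` with the sup norm,
`nullSeq 𝕜 𝒰 X = c_𝒰(X)` is the subspace of sequences whose norms tend to `0` along `𝒰`,
and `Ultrapower 𝕜 𝒰 X = ℓ∞(X)/c_𝒰(X)` is the ultrapower, with quotient map `up 𝕜 𝒰`.

The canonical linear isometry `j : (X*)^𝒰 → (X^𝒰)*` sends the class of a (bounded)
sequence of functionals `(f_n)` to the functional `(x_n)^𝒰 ↦ lim_{n→𝒰} f_n(x_n)`; hence a
functional `φ` on `X^𝒰` lies in the image of `j` if and only if there is a bounded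
sequence `(f_n)` in `X*` with `φ((x_n)^𝒰) = lim_{n→𝒰} f_n(x_n)` for every bounded
sequence `(x_n)`.  This is the predicate `InCanonicalImage` below.
-/

open Filter Topology
open scoped ENNReal

noncomputable section

/-- The normed space `ℓ∞(X)` of bounded sequences in `X`, with the sup norm. -/
abbrev BoundedSeq (X : Type*) [NormedAddCommGroup X] := lp (fun _ : ℕ => X) ∞

variable (𝕜 : Type*) [NontriviallyNormedField 𝕜]

/-- `c_𝒰(X)`: the subspace of bounded sequences tending to zero in norm along `𝒰`. -/
def nullSeq (𝒰 : Ultrafilter ℕ) (X : Type*) [NormedAddCommGroup X] [NormedSpace 𝕜 X] :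
    Submodule 𝕜 (BoundedSeq X) where
  carrier := {f | Tendsto (fun n => ‖f n‖) 𝒰 (𝓝 0)}
  zero_mem' := by simp [tendsto_const_nhds]
  add_mem' := by
    intro f g hf hg
    have h := hf.add hg
    rw [add_zero] at h
    exact squeeze_zero (fun n => norm_nonneg _) (fun n => norm_add_le _ _) h
  smul_mem' := by
    intro c f hf
    have h := hf.const_mul ‖c‖
    rw [mul_zero] at h
    exact squeeze_zero (fun n => norm_nonneg _) (fun n => by simp [norm_smul]) h

/-- The ultrapower `X^𝒰 = ℓ∞(X)/c_𝒰(X)`. -/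
abbrev Ultrapower (𝒰 : Ultrafilter ℕ) (X : Type*) [NormedAddCommGroup X] [NormedSpace 𝕜 X] :=
  BoundedSeq X ⧸ nullSeq 𝕜 𝒰 X

/-- The quotient map `ℓ∞(X) → X^𝒰`, `(x_n) ↦ (x_n)^𝒰`. -/
def up (𝒰 : Ultrafilter ℕ) {X : Type*} [NormedAddCommGroup X] [NormedSpace 𝕜 X]
    (f : BoundedSeq X) : Ultrapower 𝕜 𝒰 X := Submodule.Quotient.mk f

/-- `φ : (X^𝒰)*` lies in the image of the canonical linear isometry
`j : (X*)^𝒰 → (X^𝒰)*` iff it is induced by a bounded sequence of functionals on `X`. -/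
def InCanonicalImage (𝒰 : Ultrafilter ℕ) {X : Type*} [NormedAddCommGroup X] [NormedSpace 𝕜 X]
    (φ : StrongDual 𝕜 (Ultrapower 𝕜 𝒰 X)) : Prop :=
  ∃ f : ℕ → StrongDual 𝕜 X, (∃ C : ℝ, ∀ n, ‖f n‖ ≤ C) ∧
    ∀ x : BoundedSeq X, Tendsto (fun n => f n (x n)) 𝒰 (𝓝 (φ (up 𝕜 𝒰 x)))

/-!
Take `φ((x_m)^𝒰) = lim_{n→𝒰} lim_{m→𝒰} e_n(x_m)`. Since `e₀, …, e_{m-1}` span `ℓ¹_m`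
isometrically, for all `r, m` there is `y_{r,m}` in the unit ball with `e_n(y_{r,m})` within
`1/(m+1)` of `-1` for `n < r` and of `1` for `r ≤ n < m`. If `φ = j((f_m)^𝒰)`, then
`φ((y_{r,m})_m^𝒰) = 1` forces `re f_m(y_{r,m}) > 0` for `𝒰`-most `m`, for each `r`. A diagonal
choice `ρ(m) → ∞` along `𝒰` keeps this positivity, yet every `e_n` tends to `-1` along
`(y_{ρ(m),m})_m`, so `φ` is `-1` at that point: a contradiction.
-/

namespace ContinuousLinearMap

section UltraLimit

variable {ι 𝕜 E F : Type*} [NontriviallyNormedField 𝕜] [NormedAddCommGroup E] [NormedSpace 𝕜 E]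
  [NormedAddCommGroup F] [NormedSpace 𝕜 F] [ProperSpace F] (𝒰 : Ultrafilter ι)

theorem _root_.Ultrafilter.exists_tendsto_of_norm_le {f : ι → F} {C : ℝ} (h : ∀ i, ‖f i‖ ≤ C) :
    ∃ c, Tendsto f 𝒰 (𝓝 c) := by
  obtain ⟨c, -, hc⟩ := (isCompact_closedBall (0 : F) C).ultrafilter_le_nhds' (𝒰.map f)
    (Filter.mem_map.2 (Eventually.of_forall fun i => mem_closedBall_zero_iff.2 (h i)))
  exact ⟨c, hc⟩

variable {ψ : ι → E →L[𝕜] F} {C : ℝ}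

theorem exists_tendsto_apply_of_norm_le (hψ : ∀ i, ‖ψ i‖ ≤ C) (x : E) :
    ∃ y, Tendsto (fun i => ψ i x) 𝒰 (𝓝 y) :=
  𝒰.exists_tendsto_of_norm_le fun i => (ψ i).le_of_opNorm_le (hψ i) x

def ultraLimit (hψ : ∀ i, ‖ψ i‖ ≤ C) : E →L[𝕜] F :=
  LinearMap.mkContinuous
    { toFun x := limUnder (𝒰 : Filter ι) fun i => ψ i x
      map_add' x y := by
        simpa using ((tendsto_nhds_limUnder (exists_tendsto_apply_of_norm_le 𝒰 hψ x)).add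
          (tendsto_nhds_limUnder (exists_tendsto_apply_of_norm_le 𝒰 hψ y))).limUnder_eq
      map_smul' c x := by
        simpa using ((tendsto_nhds_limUnder
          (exists_tendsto_apply_of_norm_le 𝒰 hψ x)).const_smul c).limUnder_eq }
    C fun x => le_of_tendsto (tendsto_nhds_limUnder (exists_tendsto_apply_of_norm_le 𝒰 hψ x)).norm
      (Eventually.of_forall fun i => (ψ i).le_of_opNorm_le (hψ i) x)

theorem tendsto_ultraLimit (hψ : ∀ i, ‖ψ i‖ ≤ C) (x : E) :
    Tendsto (fun i => ψ i x) 𝒰 (𝓝 (ultraLimit 𝒰 hψ x)) :=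
  tendsto_nhds_limUnder (exists_tendsto_apply_of_norm_le 𝒰 hψ x)

theorem ultraLimit_apply_eq (hψ : ∀ i, ‖ψ i‖ ≤ C) {x : E} {y : F}
    (h : Tendsto (fun i => ψ i x) 𝒰 (𝓝 y)) : ultraLimit 𝒰 hψ x = y :=
  tendsto_nhds_unique (tendsto_ultraLimit 𝒰 hψ x) h

theorem norm_ultraLimit_le (hψ : ∀ i, ‖ψ i‖ ≤ C) : ‖ultraLimit 𝒰 hψ‖ ≤ C := by
  obtain ⟨i⟩ := (𝒰 : Filter ι).nonempty_of_neBot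
  exact LinearMap.mkContinuous_norm_le _ ((norm_nonneg _).trans (hψ i)) _

end UltraLimit

theorem norm_comp_evalCLM_le {𝕜 X F : Type*} [NontriviallyNormedField 𝕜] [NormedAddCommGroup X]
    [NormedSpace 𝕜 X] [NormedAddCommGroup F] [NormedSpace 𝕜 F] (g : X →L[𝕜] F) (m : ℕ) :
    ‖g ∘L lp.evalCLM 𝕜 (fun _ : ℕ => X) ∞ m‖ ≤ ‖g‖ :=
  opNorm_le_bound _ (norm_nonneg g) fun x =>
    (g.le_opNorm (x m)).trans (by gcongr; exact lp.norm_apply_le_norm ENNReal.top_ne_zero x m)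

end ContinuousLinearMap

section IteratedUltraLimit

open ContinuousLinearMap

variable {𝕜 : Type*} [NontriviallyNormedField 𝕜] [ProperSpace 𝕜] {X : Type*}
  [NormedAddCommGroup X] [NormedSpace 𝕜 X] (𝒰 : Ultrafilter ℕ)

def seqUltraLimit (g : StrongDual 𝕜 X) : StrongDual 𝕜 (BoundedSeq X) :=
  ultraLimit 𝒰 (norm_comp_evalCLM_le g)

theorem seqUltraLimit_apply_eq (g : StrongDual 𝕜 X) {x : BoundedSeq X} {y : 𝕜}
    (h : Tendsto (fun m => g (x m)) 𝒰 (𝓝 y)) : seqUltraLimit 𝒰 g x = y :=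
  ultraLimit_apply_eq 𝒰 (norm_comp_evalCLM_le g) h

variable {e : ℕ → StrongDual 𝕜 X} {C : ℝ}

def iteratedUltraLimit (he : ∀ n, ‖e n‖ ≤ C) : StrongDual 𝕜 (BoundedSeq X) :=
  ultraLimit 𝒰 (ψ := fun n => seqUltraLimit 𝒰 (e n))
    fun n => (norm_ultraLimit_le _ _).trans (he n)

theorem iteratedUltraLimit_apply_eq (he : ∀ n, ‖e n‖ ≤ C) (x : BoundedSeq X) {t : ℕ → 𝕜}
    (ht : ∀ n, Tendsto (fun m => e n (x m)) 𝒰 (𝓝 (t n))) {c : 𝕜} (hc : Tendsto t 𝒰 (𝓝 c)) :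
    iteratedUltraLimit 𝒰 he x = c :=
  ultraLimit_apply_eq 𝒰 _ <| hc.congr fun n => (seqUltraLimit_apply_eq 𝒰 (e n) (ht n)).symm

theorem nullSeq_le_ker_iteratedUltraLimit (he : ∀ n, ‖e n‖ ≤ C) :
    nullSeq 𝕜 𝒰 X ≤ (iteratedUltraLimit 𝒰 he).ker := fun x (hx : Tendsto _ _ _) => by
  refine iteratedUltraLimit_apply_eq 𝒰 he x (fun n => ?_) tendsto_const_nhds
  rw [tendsto_zero_iff_norm_tendsto_zero]
  refine squeeze_zero (fun m => norm_nonneg _) (fun m => (e n).le_opNorm (x m)) ?_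
  simpa using hx.const_mul ‖e n‖

def ultrapowerIteratedLimit (he : ∀ n, ‖e n‖ ≤ C) : StrongDual 𝕜 (Ultrapower 𝕜 𝒰 X) :=
  (nullSeq 𝕜 𝒰 X).liftQL _ (nullSeq_le_ker_iteratedUltraLimit 𝒰 he)

theorem ultrapowerIteratedLimit_up_eq (he : ∀ n, ‖e n‖ ≤ C) (x : BoundedSeq X) {t : ℕ → 𝕜}
    (ht : ∀ n, Tendsto (fun m => e n (x m)) 𝒰 (𝓝 (t n))) {c : 𝕜} (hc : Tendsto t 𝒰 (𝓝 c)) :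
    ultrapowerIteratedLimit 𝒰 he (up 𝕜 𝒰 x) = c :=
  iteratedUltraLimit_apply_eq 𝒰 he x ht hc

end IteratedUltraLimit

theorem RCLike.norm_sub_sq_le_of_le_re_conj_mul {𝕜 : Type*} [RCLike 𝕜] {z σ : 𝕜} {δ : ℝ}
    (hz : ‖z‖ ≤ 1) (hσ : ‖σ‖ = 1) (h : 1 - δ ≤ RCLike.re (starRingEnd 𝕜 σ * z)) :
    ‖z - σ‖ ^ 2 ≤ 2 * δ := by
  rw [← RCLike.normSq_eq_def', RCLike.normSq_sub, RCLike.normSq_eq_def',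
    RCLike.normSq_eq_def', hσ, mul_comm z]
  nlinarith [norm_nonneg z]

theorem StrongDual.exists_norm_le_one_lt_re_apply {𝕜 X : Type*} [RCLike 𝕜] [NormedAddCommGroup X]
    [NormedSpace 𝕜 X] (F : StrongDual 𝕜 X) {r : ℝ} (hr : r < ‖F‖) :
    ∃ y : X, ‖y‖ ≤ 1 ∧ r < RCLike.re (F y) := by
  obtain ⟨x, hx, hrx⟩ := F.exists_lt_apply_of_lt_opNorm hr
  set c : 𝕜 := (‖F x‖ : 𝕜) / F x
  refine ⟨c • x, ?_, ?_⟩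
  · have hc : ‖c‖ ≤ 1 := by
      rw [norm_div, RCLike.norm_ofReal, abs_norm]
      exact div_self_le_one _
    rw [norm_smul]
    nlinarith [norm_nonneg c, norm_nonneg x]
  · rwa [map_smul, smul_eq_mul, div_mul_cancel_of_imp fun h => by simp [h], RCLike.ofReal_re]

section IsL1Isometric

variable {𝕜 E : Type*} [RCLike 𝕜] [NormedAddCommGroup E] [NormedSpace 𝕜 E]

variable (𝕜) in
def IsL1Isometric (e : ℕ → E) : Prop :=
  ∀ (m : ℕ) (r : ℕ → 𝕜), ‖∑ n ∈ Finset.range m, r n • e n‖ = ∑ n ∈ Finset.range m, ‖r n‖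

theorem IsL1Isometric.norm_eq_one {e : ℕ → E} (he : IsL1Isometric 𝕜 e) (k : ℕ) :
    ‖e k‖ = 1 := by
  have h := he (k + 1) (Pi.single k 1)
  rwa [Finset.sum_eq_single_of_mem k (by simp) fun n _ hn => by
      rw [Pi.single_eq_of_ne hn]; exact zero_smul 𝕜 (e n),
    Finset.sum_eq_single_of_mem k (by simp) fun n _ hn => by simp [hn], Pi.single_eq_same,
    one_smul, norm_one] at h

theorem IsL1Isometric.exists_norm_le_one_forall_norm_apply_sub_le {X : Type*}
    [NormedAddCommGroup X] [NormedSpace 𝕜 X] {e : ℕ → StrongDual 𝕜 X} (he : IsL1Isometric 𝕜 e)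
    (m : ℕ) {σ : ℕ → 𝕜} (hσ : ∀ n < m, ‖σ n‖ = 1) {ε : ℝ} (hε : 0 < ε) :
    ∃ y : X, ‖y‖ ≤ 1 ∧ ∀ n < m, ‖e n y - σ n‖ ≤ ε := by
  set F := ∑ n ∈ Finset.range m, starRingEnd 𝕜 (σ n) • e n
  have hF : ‖F‖ = m := by
    rw [he, Finset.sum_congr rfl fun n hn => by rw [RCLike.norm_conj, hσ n (Finset.mem_range.1 hn)]]
    simp
  obtain ⟨y, hy, hFy⟩ := F.exists_norm_le_one_lt_re_apply (r := m - ε ^ 2 / 2)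
    (by rw [hF]; linarith [sq_pos_of_pos hε])
  have happly : ∀ n, ‖e n y‖ ≤ 1 := fun n =>
    (e n).le_of_opNorm_le (he.norm_eq_one n).le y |>.trans (by simpa using hy)
  set a : ℕ → ℝ := fun n => RCLike.re (starRingEnd 𝕜 (σ n) * e n y) with ha
  have ha_le : ∀ n < m, a n ≤ 1 := fun n hn =>
    (RCLike.re_le_norm _).trans (by simpa [hσ n hn] using happly n)
  have hFa : RCLike.re (F y) = ∑ n ∈ Finset.range m, a n := by
    simp [F, ha, _root_.sum_apply]
  refine ⟨y, hy, fun n hn => ?_⟩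
  -- the defects `1 - a k` are nonnegative and sum to less than `ε ^ 2 / 2`
  have han : 1 - ε ^ 2 / 2 ≤ a n := by
    have := Finset.single_le_sum (f := fun k => 1 - a k)
      (fun k hk => sub_nonneg.2 (ha_le k (Finset.mem_range.1 hk))) (Finset.mem_range.2 hn)
    simp only [Finset.sum_sub_distrib, Finset.sum_const, Finset.card_range,
      nsmul_eq_mul, mul_one] at this
    linarith
  have hsq := RCLike.norm_sub_sq_le_of_le_re_conj_mul (happly n) (hσ n hn) han
  exact (pow_le_pow_iff_left₀ (norm_nonneg _) hε.le two_ne_zero).1 (by linarith)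

end IsL1Isometric

theorem Filter.exists_tendsto_atTop_eventually_diag {l : Filter ℕ} (hl : l ≤ atTop)
    {p : ℕ → ℕ → Prop} (hp : ∀ r, ∀ᶠ m in l, p r m) :
    ∃ ρ : ℕ → ℕ, Tendsto ρ l atTop ∧ ∀ᶠ m in l, p (ρ m) m := by
  classical
  let q : ℕ → ℕ → Prop := fun m r => ∀ r' ≤ r, p r' m
  have hq : ∀ r, ∀ᶠ m in l, r ≤ m ∧ q m r := fun r =>
    (eventually_ge_atTop r).filter_mono hl |>.and <|
      (eventually_all_finite (Set.finite_Iic r)).2 fun r' _ => hp r'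
  refine ⟨fun m => Nat.findGreatest (q m) m, tendsto_atTop.2 fun r => ?_, ?_⟩
  · filter_upwards [hq r] with m hm using Nat.le_findGreatest hm.1 hm.2
  · filter_upwards [hq 0] with m hm
    exact Nat.findGreatest_spec hm.1 hm.2 _ le_rfl

theorem tendsto_of_eventually_norm_sub_le_one_div_succ {E : Type*} [SeminormedAddCommGroup E]
    {l : Filter ℕ} (hl : l ≤ atTop) {g : ℕ → E} {c : E}
    (h : ∀ᶠ m in l, ‖g m - c‖ ≤ 1 / ((m : ℝ) + 1)) : Tendsto g l (𝓝 c) :=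
  tendsto_iff_norm_sub_tendsto_zero.2 <| squeeze_zero' (.of_forall fun _ => norm_nonneg _) h
    (tendsto_one_div_add_atTop_nhds_zero_nat.mono_left hl)

theorem canonical_map_not_surjective_general
    (𝒰 : Ultrafilter ℕ) (h𝒰 : (𝒰 : Filter ℕ) ≤ Filter.cofinite)
    {𝕜 : Type*} [RCLike 𝕜] (X : Type*) [NormedAddCommGroup X] [NormedSpace 𝕜 X]
    (e : ℕ → StrongDual 𝕜 X)
    (he : ∀ (m : ℕ) (r : ℕ → 𝕜),
      ‖∑ n ∈ Finset.range m, r n • e n‖ = ∑ n ∈ Finset.range m, ‖r n‖) :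
    ∃ φ : StrongDual 𝕜 (Ultrapower 𝕜 𝒰 X), ¬ InCanonicalImage 𝕜 𝒰 φ := by
  have hl : (𝒰 : Filter ℕ) ≤ atTop := Nat.cofinite_eq_atTop ▸ h𝒰
  have hle : ∀ n, ‖e n‖ ≤ 1 := fun n => (IsL1Isometric.norm_eq_one he n).le
  let s : ℕ → ℕ → 𝕜 := fun r n => if n < r then -1 else 1
  choose y hy1 hy using fun r (m : ℕ) =>
    IsL1Isometric.exists_norm_le_one_forall_norm_apply_sub_le he m (σ := s r)
      (fun n _ => by unfold s; split_ifs <;> simp) (ε := 1 / ((m : ℝ) + 1)) (by positivity)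
  refine ⟨ultrapowerIteratedLimit 𝒰 hle, fun ⟨f, _, hf⟩ => ?_⟩
  have hlim : ∀ (ρ : ℕ → ℕ) (t : ℕ → 𝕜) (c : 𝕜), (∀ n, ∀ᶠ m in 𝒰, s (ρ m) n = t n) →
      Tendsto t 𝒰 (𝓝 c) → Tendsto (fun m => f m (y (ρ m) m)) 𝒰 (𝓝 c) := by
    intro ρ t c hst hc
    let x : BoundedSeq X :=
      ⟨fun m => y (ρ m) m, memℓp_infty ⟨1, by rintro _ ⟨m, rfl⟩; exact hy1 _ m⟩⟩
    have hx : ∀ n, Tendsto (fun m => e n (x m)) 𝒰 (𝓝 (t n)) := fun n =>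
      tendsto_of_eventually_norm_sub_le_one_div_succ hl <| by
        filter_upwards [hst n, (eventually_gt_atTop n).filter_mono hl] with m hs hm
        exact hs ▸ hy _ _ n hm
    simpa only [ultrapowerIteratedLimit_up_eq 𝒰 hle x hx hc] using hf x
  have hpos : ∀ r, ∀ᶠ m in 𝒰, 0 < RCLike.re (f m (y r m)) := fun r => by
    have h1 := hlim (fun _ => r) (s r) 1 (fun n => .of_forall fun _ => rfl)
      (tendsto_const_nhds.congr' ((eventually_ge_atTop r).filter_mono hl |>.mono fun n hn => by
        simp [s, not_lt.2 hn]))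
    exact (RCLike.continuous_re.tendsto _ |>.comp h1).eventually (lt_mem_nhds (by simp))
  obtain ⟨ρ, hρ, hρpos⟩ := Filter.exists_tendsto_atTop_eventually_diag hl hpos
  have hneg : Tendsto (fun m => f m (y (ρ m) m)) 𝒰 (𝓝 (-1)) :=
    hlim ρ (fun _ => -1) (-1) (fun n => (hρ.eventually_gt_atTop n).mono fun m hm => by simp [s, hm])
      tendsto_const_nhds
  obtain ⟨m, hm, hm'⟩ := (hρpos.and <| (RCLike.continuous_re.tendsto _ |>.comp hneg).eventually
    (gt_mem_nhds (by simp : RCLike.re (-1 : 𝕜) < 0))).exists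
  exact lt_asymm hm hm'

/-- Let `𝕜` be `ℝ` or `ℂ` and let `X` be an infinite-dimensional normed
space over `𝕜` whose dual contains an isometric copy of `ℓ¹`.  Then the canonical linear
isometry `j : (X*)^𝒰 → (X^𝒰)*` is not surjective. -/
theorem canonical_map_not_surjective
    (𝒰 : Ultrafilter ℕ) (h𝒰 : (𝒰 : Filter ℕ) ≤ Filter.cofinite)
    {𝕜 : Type*} [RCLike 𝕜] (X : Type*) [NormedAddCommGroup X] [NormedSpace 𝕜 X]
    (hdim : ¬ FiniteDimensional 𝕜 X)
    (e : ℕ → StrongDual 𝕜 X)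
    (he : ∀ (m : ℕ) (r : ℕ → 𝕜),
      ‖∑ n ∈ Finset.range m, r n • e n‖ = ∑ n ∈ Finset.range m, ‖r n‖) :
    ∃ φ : StrongDual 𝕜 (Ultrapower 𝕜 𝒰 X), ¬ InCanonicalImage 𝕜 𝒰 φ :=
  canonical_map_not_surjective_general 𝒰 h𝒰 X e he
end
end

section
/- Let 𝔽 be ℝ or ℂ, let 𝒰 be a nonprincipal ultrafilter on ℕ, and let X be an infinite-dimensional normed space over 𝔽 with a sequence (e_n*) in X* satisfying ‖Σ_{n≤m} r_n e_n*‖ = Σ_{n≤m}|r_n| for every m and all scalars r_n, and with the extension property: for every m and every x* ∈ X* not in span{e_1*,…,e_m*}, there exists f* ∈ X* such that span{e_1*,…,e_m*, x*} = span{e_1*,…,e_m*, f*} and ‖r f* + Σ_{k≤m} r_k e_k*‖ = |r| + Σ_{k≤m}|r_k| for all scalars r, r_1,…,r_m. Then there exists x* ∈ (X^𝒰)* with ‖x*‖ = 1 whose distance to the image of the canonical isometry j : (X*)^𝒰 → (X^𝒰)* equals 1. -/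
/-!
Ultrapowers of normed spaces along a nonprincipal ultrafilter `𝒰` on `ℕ`.

`BoundedSeq X = ℓ∞(X)` is the normed space of bounded sequences in `X` with the sup norm,
`nullSeq 𝕜 𝒰 X = c_𝒰(X)` is the subspace of sequences whose norms tend to `0` along `𝒰`,
and `Ultrapower 𝕜 𝒰 X = ℓ∞(X)/c_𝒰(X)` is the ultrapower, with quotient map `up 𝕜 𝒰`.

The canonical linear isometry `j : (X*)^𝒰 → (X^𝒰)*` sends the class of a (bounded)
sequence of functionals `(f_n)` to the functional `(x_n)^𝒰 ↦ lim_{n→𝒰} f_n(x_n)`; hence a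
functional `φ` on `X^𝒰` lies in the image of `j` if and only if there is a bounded
sequence `(f_n)` in `X*` with `φ((x_n)^𝒰) = lim_{n→𝒰} f_n(x_n)` for every bounded
sequence `(x_n)`.  This is the predicate `InCanonicalImage` below.
-/

open Filter Topology
open scoped ENNReal

noncomputable section

variable (𝕜 : Type*) [NontriviallyNormedField 𝕜]

/-!
The witness is `φ((x_n)^𝒰) = lim_{k→𝒰} lim_{n→𝒰} e_k*(x_n)`, a functional of norm at most `1`.
Let `ψ = j((f_n)^𝒰)` with `‖f_n‖ ≤ C`. By the extension property,
`f_n = a_n g_n + Σ_{k<n} b_{n,k} e_k*` where `g_n, e_0*, …, e_{n-1}*` span an isometric copy of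
`ℓ¹`, so `Σ_k |b_{n,k}| ≤ C`. The limits `β_k = lim_{n→𝒰} b_{n,k}` are summable, hence beyond
some `K` the rows `b_n` carry mass `< ε` on windows `[K, M_n)` with `M_n → ∞` along `𝒰`. Because
the family is `ℓ¹`, there are `x_n` in the unit ball with `g_n(x_n) ≈ 0`, `e_k*(x_n) ≈ 1` on the
window and `e_k*(x_n) ≈ 0` off it. Then `φ(x) = 1` while `|ψ(x)| ≤ ε`, so `‖φ - ψ‖ ≥ 1 - ε` for
every `ε > 0`; the case `ψ = 0` gives `‖φ‖ = 1`.
-/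

section Sums

def extendByZero {M : Type*} [Zero M] {n : ℕ} (r : Fin n → M) (k : ℕ) : M :=
  if h : k < n then r ⟨k, h⟩ else 0

theorem sum_range_extendByZero_mul {R : Type*} [NonUnitalNonAssocSemiring R] {n : ℕ}
    (r : Fin n → R) (χ : ℕ → R) :
    ∑ k ∈ Finset.range n, extendByZero r k * χ k = ∑ k : Fin n, r k * χ k := by
  rw [← Fin.sum_univ_eq_sum_range (fun k => extendByZero r k * χ k)]
  simp only [extendByZero, Fin.is_lt, dite_true]

theorem sum_range_norm_extendByZero_le {M : Type*} [SeminormedAddCommGroup M] {n : ℕ}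
    (r : Fin n → M) (K : ℕ) : ∑ k ∈ Finset.range K, ‖extendByZero r k‖ ≤ ∑ k, ‖r k‖ :=
  calc ∑ k ∈ Finset.range K, ‖extendByZero r k‖
      ≤ ∑ k ∈ Finset.range (max K n), ‖extendByZero r k‖ :=
        Finset.sum_le_sum_of_subset_of_nonneg (Finset.range_subset_range.2 (le_max_left K n))
          fun k _ _ => norm_nonneg _
    _ = ∑ k ∈ Finset.range n, ‖extendByZero r k‖ := by
        rw [← Finset.sum_range_add_sum_Ico _ (le_max_right K n), add_eq_left]
        refine Finset.sum_eq_zero fun k hk => ?_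
        simp [extendByZero, not_lt.2 (Finset.mem_Ico.1 hk).1]
    _ = ∑ k, ‖r k‖ := by
        rw [← Fin.sum_univ_eq_sum_range (fun k => ‖extendByZero r k‖)]
        simp only [extendByZero, Fin.is_lt, dite_true]

theorem norm_sum_mul_ite_mem_le {R : Type*} [NormedRing R] (b : ℕ → R) (s t : Finset ℕ) :
    ‖∑ k ∈ s, b k * (if k ∈ t then 1 else 0)‖ ≤ ∑ k ∈ t, ‖b k‖ := by
  simp only [mul_ite, mul_one, mul_zero]
  rw [Finset.sum_ite_mem]
  exact (norm_sum_le _ _).trans (Finset.sum_le_sum_of_subset_of_nonneg Finset.inter_subset_right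
    fun k _ _ => norm_nonneg (b k))

end Sums

section Scalars

variable {𝕜 : Type*} [RCLike 𝕜]

theorem norm_sub_sq_le_of_norm_le_one {z τ : 𝕜} (hz : ‖z‖ ≤ 1) (hτ : ‖τ‖ = 1) :
    ‖z - τ‖ ^ 2 ≤ 2 * (1 - RCLike.re (starRingEnd 𝕜 τ * z)) := by
  have hre : RCLike.re (inner 𝕜 z τ) = RCLike.re (starRingEnd 𝕜 τ * z) := by
    rw [RCLike.inner_apply, ← RCLike.conj_re, map_mul, RCLike.conj_conj, mul_comm]
  rw [@norm_sub_sq 𝕜, hre, hτ]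
  nlinarith [norm_nonneg z]

theorem StrongDual.exists_norm_le_one_lt_re_apply_s4 {E : Type*} [NormedAddCommGroup E]
    [NormedSpace 𝕜 E] (f : StrongDual 𝕜 E) {s : ℝ} (hs : s < ‖f‖) :
    ∃ x : E, ‖x‖ ≤ 1 ∧ s < RCLike.re (f x) := by
  obtain ⟨x, hx, hsx⟩ := f.exists_lt_apply_of_lt_opNorm hs
  set c : 𝕜 := starRingEnd 𝕜 (f x) / ‖f x‖
  have hc : ‖c‖ ≤ 1 := by
    rw [norm_div, RCLike.norm_conj, RCLike.norm_ofReal, abs_norm]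
    exact div_self_le_one _
  -- rotating `x` by the phase of `f x` makes `f` real and positive on it
  have hfc : f (c • x) = (‖f x‖ : 𝕜) := by
    rw [map_smul, smul_eq_mul, div_mul_eq_mul_div, RCLike.conj_mul, sq, mul_self_div_self]
  refine ⟨c • x, ?_, by rwa [hfc, RCLike.ofReal_re]⟩
  rw [norm_smul]
  exact mul_le_one₀ hc (norm_nonneg _) hx.le

theorem StrongDual.one_le_norm_sub {E : Type*} [SeminormedAddCommGroup E] [NormedSpace 𝕜 E]
    {φ ψ : StrongDual 𝕜 E} (h : ∀ ε > 0, ∃ z : E, ‖z‖ ≤ 1 ∧ φ z = 1 ∧ ‖ψ z‖ ≤ ε) :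
    1 ≤ ‖φ - ψ‖ := by
  refine le_of_forall_pos_le_add fun ε hε => ?_
  obtain ⟨z, hz, hφz, hψz⟩ := h ε hε
  calc (1 : ℝ) = ‖(φ - ψ) z + ψ z‖ := by rw [sub_apply, sub_add_cancel, hφz, norm_one]
    _ ≤ ‖(φ - ψ) z‖ + ‖ψ z‖ := norm_add_le _ _
    _ ≤ ‖φ - ψ‖ + ε := by
      gcongr
      simpa using (φ - ψ).le_opNorm_of_le hz

end Scalars

theorem Submodule.norm_liftQL_le {𝕜 M F : Type*} [NontriviallyNormedField 𝕜]
    [SeminormedAddCommGroup M] [NormedSpace 𝕜 M] [SeminormedAddCommGroup F] [NormedSpace 𝕜 F]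
    {S : Submodule 𝕜 M} (f : M →L[𝕜] F) (h : S ≤ f.ker) : ‖S.liftQL f h‖ ≤ ‖f‖ := by
  refine ContinuousLinearMap.opNorm_le_bound _ (norm_nonneg f) fun z => ?_
  refine le_of_forall_pos_le_add fun ε hε => ?_
  have hδ : 0 < ε / (‖f‖ + 1) := by positivity
  obtain ⟨m, rfl, hm⟩ := Submodule.Quotient.norm_mk_lt z hδ
  have hfε : ‖f‖ * (ε / (‖f‖ + 1)) ≤ ε := by
    rw [mul_div_assoc', div_le_iff₀ (by positivity)]
    nlinarith [norm_nonneg f]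
  calc ‖S.liftQL f h (Submodule.Quotient.mk m)‖ = ‖f m‖ := rfl
    _ ≤ ‖f‖ * ‖m‖ := f.le_opNorm m
    _ ≤ ‖f‖ * (‖(Submodule.Quotient.mk m : M ⧸ S)‖ + ε / (‖f‖ + 1)) := by gcongr
    _ ≤ ‖f‖ * ‖(Submodule.Quotient.mk m : M ⧸ S)‖ + ε := by rw [mul_add]; linarith

theorem Ultrafilter.tendsto_limUnder_of_norm_le {α E : Type*} [NormedAddCommGroup E]
    [ProperSpace E] (𝒰 : Ultrafilter α) {u : α → E} {C : ℝ} (hu : ∀ a, ‖u a‖ ≤ C) :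
    Tendsto u 𝒰 (𝓝 (limUnder 𝒰 u)) := by
  obtain ⟨x, -, hx⟩ := (isCompact_closedBall (0 : E) C).ultrafilter_le_nhds' (𝒰.map u)
    (Filter.mem_map.2 (univ_mem' fun a => by simpa using hu a))
  exact tendsto_nhds_limUnder ⟨x, hx⟩

/-- Mass escape: if the rows `a n` are uniformly `ℓ¹`-bounded, then beyond some `K` they carry
little mass on windows `[K, M n)` whose right ends tend to infinity along `𝒰`. -/
theorem exists_sum_Ico_lt_of_sum_range_le {𝒰 : Ultrafilter ℕ} (h𝒰 : (𝒰 : Filter ℕ) ≤ atTop)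
    {a : ℕ → ℕ → ℝ} (ha0 : ∀ n k, 0 ≤ a n k) {C : ℝ}
    (haC : ∀ n K, ∑ k ∈ Finset.range K, a n k ≤ C) {ε : ℝ} (hε : 0 < ε) :
    ∃ (K : ℕ) (M : ℕ → ℕ), (∀ L, ∀ᶠ n in 𝒰, L ≤ M n) ∧
      ∀ n, ∑ k ∈ Finset.Ico K (M n), a n k < ε := by
  set β : ℕ → ℝ := fun k => limUnder 𝒰 fun n => a n k
  have hβ : ∀ k, Tendsto (fun n => a n k) 𝒰 (𝓝 (β k)) := fun k =>
    𝒰.tendsto_limUnder_of_norm_le (C := C) fun n => by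
      rw [Real.norm_of_nonneg (ha0 n k)]
      exact (Finset.single_le_sum (fun j _ => ha0 n j) (Finset.self_mem_range_succ k)).trans
        (haC n (k + 1))
  have hsum : ∀ s : Finset ℕ, Tendsto (fun n => ∑ k ∈ s, a n k) 𝒰 (𝓝 (∑ k ∈ s, β k)) :=
    fun s => tendsto_finsetSum s fun k _ => hβ k
  have hβ_summable : Summable β :=
    summable_of_sum_range_le (fun k => ge_of_tendsto' (hβ k) (ha0 · k))
      fun K => le_of_tendsto' (hsum _) (haC · K)
  obtain ⟨K, hK⟩ : ∃ K, ∀ m, ∑ k ∈ Finset.Ico K m, β k < ε := by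
    obtain ⟨K, hK⟩ := Metric.cauchySeq_iff'.1 hβ_summable.hasSum.tendsto_sum_nat.cauchySeq ε hε
    refine ⟨K, fun m => ?_⟩
    rcases le_or_gt K m with hKm | hmK
    · rw [Finset.sum_Ico_eq_sub _ hKm]
      exact (le_abs_self _).trans_lt (hK m hKm)
    · simpa [Finset.Ico_eq_empty_of_le hmK.le] using hε
  refine ⟨K, fun n => Nat.findGreatest (fun m => ∑ k ∈ Finset.Ico K m, a n k < ε) n,
    fun L => ?_, fun n => Nat.findGreatest_spec (P := fun m => ∑ k ∈ Finset.Ico K m, a n k < ε)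
      (Nat.zero_le n) (by simpa using hε)⟩
  filter_upwards [(hsum _).eventually (gt_mem_nhds (hK L)), h𝒰 (eventually_ge_atTop L)]
    with n hLε hLn
  exact Nat.le_findGreatest hLn hLε

section L1Family

def IsL1Family (𝕜 : Type*) {ι E : Type*} [NormedField 𝕜] [Fintype ι]
    [SeminormedAddCommGroup E] [NormedSpace 𝕜 E] (v : ι → E) : Prop :=
  ∀ r : ι → 𝕜, ‖∑ i, r i • v i‖ = ∑ i, ‖r i‖

variable {𝕜 ι E : Type*} [NormedField 𝕜] [Fintype ι] [SeminormedAddCommGroup E]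
  [NormedSpace 𝕜 E]

theorem IsL1Family.norm_eq_one {v : ι → E} (hv : IsL1Family 𝕜 v) (i : ι) : ‖v i‖ = 1 := by
  classical
  simpa [Pi.single_apply, apply_ite norm] using hv (Pi.single i 1)

theorem isL1Family_option_elim_iff {g : E} {v : ι → E} :
    IsL1Family 𝕜 (fun o : Option ι => o.elim g v) ↔
      ∀ (r : 𝕜) (rs : ι → 𝕜), ‖r • g + ∑ i, rs i • v i‖ = ‖r‖ + ∑ i, ‖rs i‖ := by
  simp only [IsL1Family, Fintype.sum_option, Option.elim_none, Option.elim_some]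
  exact ⟨fun h r rs => h fun o => o.elim r rs, fun h r => h (r none) (r ∘ some)⟩

theorem norm_sum_smul_apply_sub_le {g : ι → StrongDual 𝕜 E} {x : E} {τ : ι → 𝕜} {δ : ℝ}
    (h : ∀ i, ‖g i x - τ i‖ ≤ δ) (r : ι → 𝕜) :
    ‖(∑ i, r i • g i) x - ∑ i, r i * τ i‖ ≤ (∑ i, ‖r i‖) * δ := by
  have hsplit : (∑ i, r i • g i) x - ∑ i, r i * τ i = ∑ i, r i * (g i x - τ i) := by
    simp only [FunLike.coe_sum, Finset.sum_apply, FunLike.coe_smul, Pi.smul_apply, smul_eq_mul,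
      mul_sub, Finset.sum_sub_distrib]
  rw [hsplit, Finset.sum_mul]
  refine (norm_sum_le _ _).trans (Finset.sum_le_sum fun i _ => ?_)
  rw [norm_mul]
  exact mul_le_mul_of_nonneg_left (h i) (norm_nonneg _)

end L1Family

section TestVectors

variable {𝕜 ι X : Type*} [RCLike 𝕜] [Fintype ι] [NormedAddCommGroup X] [NormedSpace 𝕜 X]
  {g : ι → StrongDual 𝕜 X}

theorem IsL1Family.exists_norm_le_one_apply_near_of_norm_eq_one (hg : IsL1Family 𝕜 g)
    {τ : ι → 𝕜} (hτ : ∀ i, ‖τ i‖ = 1) {δ : ℝ} (hδ : 0 < δ) :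
    ∃ x : X, ‖x‖ ≤ 1 ∧ ∀ i, ‖g i x - τ i‖ ≤ δ := by
  set G : StrongDual 𝕜 X := ∑ i, starRingEnd 𝕜 (τ i) • g i
  have hG : ‖G‖ = Fintype.card ι := by simp [G, hg _, hτ]
  obtain ⟨x, hx, hGx⟩ := G.exists_norm_le_one_lt_re_apply_s4 (s := Fintype.card ι - δ ^ 2 / 2)
    (by rw [hG]; linarith [pow_pos hδ 2])
  refine ⟨x, hx, fun i => ?_⟩
  set t : ι → ℝ := fun j => RCLike.re (starRingEnd 𝕜 (τ j) * g j x)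
  have hgx : ∀ j, ‖g j x‖ ≤ 1 := fun j =>
    ((g j).le_opNorm x).trans (by rw [hg.norm_eq_one, one_mul]; exact hx)
  have ht : ∀ j, t j ≤ 1 := fun j =>
    (RCLike.re_le_norm _).trans (by rw [norm_mul, RCLike.norm_conj, hτ, one_mul]; exact hgx j)
  have hGt : RCLike.re (G x) = ∑ j, t j := by simp [G, t]
  -- all the `t j` are at most `1` and their sum is almost `card ι`, so each is almost `1`
  have hti : 1 - t i ≤ ∑ j, (1 - t j) :=
    Finset.single_le_sum (fun j _ => sub_nonneg.2 (ht j)) (Finset.mem_univ i)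
  rw [Finset.sum_sub_distrib, ← hGt] at hti
  have hsq := norm_sub_sq_le_of_norm_le_one (hgx i) (hτ i)
  simp only [Finset.sum_const, Finset.card_univ, nsmul_eq_mul, mul_one] at hti
  exact (pow_le_pow_iff_left₀ (norm_nonneg _) hδ.le two_ne_zero).1 (by linarith)

theorem IsL1Family.exists_norm_le_one_apply_near (hg : IsL1Family 𝕜 g)
    {τ : ι → 𝕜} (hτ : ∀ i, τ i = 0 ∨ τ i = 1) {δ : ℝ} (hδ : 0 < δ) :
    ∃ x : X, ‖x‖ ≤ 1 ∧ ∀ i, ‖g i x - τ i‖ ≤ δ := by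
  -- `τ` is the midpoint of the unimodular vectors `1` and `2τ - 1`
  obtain ⟨y, hy, hgy⟩ := hg.exists_norm_le_one_apply_near_of_norm_eq_one
    (τ := fun _ => 1) (fun _ => norm_one) hδ
  obtain ⟨z, hz, hgz⟩ := hg.exists_norm_le_one_apply_near_of_norm_eq_one
    (τ := fun i => 2 * τ i - 1) (fun i => by rcases hτ i with h | h <;> norm_num [h]) hδ
  have h2 : ‖(2 : 𝕜)‖ = 2 := by simp
  refine ⟨(2 : 𝕜)⁻¹ • (y + z), ?_, fun i => ?_⟩
  · rw [norm_smul, norm_inv, h2]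
    linarith [norm_add_le y z]
  · have hsplit : g i ((2 : 𝕜)⁻¹ • (y + z)) - τ i
        = (2 : 𝕜)⁻¹ * ((g i y - 1) + (g i z - (2 * τ i - 1))) := by
      rw [map_smul, map_add, smul_eq_mul]
      ring
    rw [hsplit, norm_mul, norm_inv, h2]
    linarith [norm_add_le (g i y - 1) (g i z - (2 * τ i - 1)), hgy i, hgz i]

end TestVectors

section IteratedUltralimit

variable {𝕜 X : Type*} [RCLike 𝕜] [NormedAddCommGroup X] [NormedSpace 𝕜 X]
  (𝒰 : Ultrafilter ℕ) (e : ℕ → StrongDual 𝕜 X)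

def coordUltralimit (x : BoundedSeq X) (k : ℕ) : 𝕜 := limUnder 𝒰 fun n => e k (x n)

def iteratedUltralimit (x : BoundedSeq X) : 𝕜 := limUnder 𝒰 (coordUltralimit 𝒰 e x)

variable {e}

theorem iteratedUltralimit_eq {x : BoundedSeq X} {c : ℕ → 𝕜} {L : 𝕜}
    (hc : ∀ k, Tendsto (fun n => e k (x n)) 𝒰 (𝓝 (c k))) (hL : Tendsto c 𝒰 (𝓝 L)) :
    iteratedUltralimit 𝒰 e x = L := by
  have hcoord : coordUltralimit 𝒰 e x = c := funext fun k => (hc k).limUnder_eq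
  rw [iteratedUltralimit, hcoord, hL.limUnder_eq]

variable (he : ∀ k, ‖e k‖ ≤ 1)
include he

theorem norm_apply_le_of_norm_le_one (y : X) (k : ℕ) : ‖e k y‖ ≤ ‖y‖ :=
  ((e k).le_opNorm y).trans (mul_le_of_le_one_left (norm_nonneg y) (he k))

theorem tendsto_coordUltralimit (x : BoundedSeq X) (k : ℕ) :
    Tendsto (fun n => e k (x n)) 𝒰 (𝓝 (coordUltralimit 𝒰 e x k)) :=
  𝒰.tendsto_limUnder_of_norm_le fun n => (norm_apply_le_of_norm_le_one he (x n) k).trans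
    (lp.norm_apply_le_norm ENNReal.top_ne_zero x n)

theorem norm_coordUltralimit_le (x : BoundedSeq X) (k : ℕ) :
    ‖coordUltralimit 𝒰 e x k‖ ≤ ‖x‖ :=
  le_of_tendsto' (tendsto_coordUltralimit 𝒰 he x k).norm fun n =>
    (norm_apply_le_of_norm_le_one he (x n) k).trans (lp.norm_apply_le_norm ENNReal.top_ne_zero x n)

theorem tendsto_iteratedUltralimit (x : BoundedSeq X) :
    Tendsto (coordUltralimit 𝒰 e x) 𝒰 (𝓝 (iteratedUltralimit 𝒰 e x)) :=
  𝒰.tendsto_limUnder_of_norm_le (norm_coordUltralimit_le 𝒰 he x)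

theorem norm_iteratedUltralimit_le (x : BoundedSeq X) : ‖iteratedUltralimit 𝒰 e x‖ ≤ ‖x‖ :=
  le_of_tendsto' (tendsto_iteratedUltralimit 𝒰 he x).norm (norm_coordUltralimit_le 𝒰 he x)

theorem iteratedUltralimit_eq_of_eventually {x : BoundedSeq X} {L : 𝕜}
    (hx : ∀ᶠ k in 𝒰, Tendsto (fun n => e k (x n)) 𝒰 (𝓝 L)) : iteratedUltralimit 𝒰 e x = L :=
  tendsto_nhds_unique (tendsto_iteratedUltralimit 𝒰 he x) <| tendsto_const_nhds.congr' <|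
    hx.mono fun k hk => tendsto_nhds_unique hk (tendsto_coordUltralimit 𝒰 he x k)

def iteratedUltralimitCLM : BoundedSeq X →L[𝕜] 𝕜 :=
  LinearMap.mkContinuous
    { toFun := iteratedUltralimit 𝒰 e
      map_add' := fun x y => iteratedUltralimit_eq 𝒰
        (fun k => ((tendsto_coordUltralimit 𝒰 he x k).add (tendsto_coordUltralimit 𝒰 he y k)).congr
          fun n => (map_add (e k) (x n) (y n)).symm)
        ((tendsto_iteratedUltralimit 𝒰 he x).add (tendsto_iteratedUltralimit 𝒰 he y))
      map_smul' := fun c x => iteratedUltralimit_eq 𝒰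
        (fun k => ((tendsto_coordUltralimit 𝒰 he x k).const_mul c).congr
          fun n => (map_smul (e k) c (x n)).symm)
        ((tendsto_iteratedUltralimit 𝒰 he x).const_mul c) }
    1 fun x => by rw [one_mul]; exact norm_iteratedUltralimit_le 𝒰 he x

theorem nullSeq_le_ker_iteratedUltralimitCLM :
    nullSeq 𝕜 𝒰 X ≤ (iteratedUltralimitCLM 𝒰 he).ker := fun x (hx : Tendsto _ _ _) =>
  iteratedUltralimit_eq 𝒰 (c := 0)
    (fun k => squeeze_zero_norm (fun n => norm_apply_le_of_norm_le_one he (x n) k) hx)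
    tendsto_const_nhds

def iteratedUltralimitDual : StrongDual 𝕜 (Ultrapower 𝕜 𝒰 X) :=
  (nullSeq 𝕜 𝒰 X).liftQL (iteratedUltralimitCLM 𝒰 he) (nullSeq_le_ker_iteratedUltralimitCLM 𝒰 he)

theorem iteratedUltralimitDual_up (x : BoundedSeq X) :
    iteratedUltralimitDual 𝒰 he (up 𝕜 𝒰 x) = iteratedUltralimit 𝒰 e x :=
  rfl

theorem norm_iteratedUltralimitDual_le : ‖iteratedUltralimitDual 𝒰 he‖ ≤ 1 :=
  (Submodule.norm_liftQL_le _ _).trans (LinearMap.mkContinuous_norm_le _ zero_le_one _)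

end IteratedUltralimit

section ExtensionProperty

variable {𝕜 X : Type*} [RCLike 𝕜] [NormedAddCommGroup X] [NormedSpace 𝕜 X]
  {e : ℕ → StrongDual 𝕜 X}

theorem isL1Family_fin_of_sum_range
    (he : ∀ (m : ℕ) (r : ℕ → 𝕜), ‖∑ n ∈ Finset.range m, r n • e n‖ = ∑ n ∈ Finset.range m, ‖r n‖)
    (m : ℕ) : IsL1Family 𝕜 fun k : Fin m => e k := fun r => by
  simpa [extendByZero, ← Fin.sum_univ_eq_sum_range] using he m (extendByZero r)

theorem exists_isL1Family_option_mem_span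
    (he : ∀ (m : ℕ) (r : ℕ → 𝕜), ‖∑ n ∈ Finset.range m, r n • e n‖ = ∑ n ∈ Finset.range m, ‖r n‖)
    (hext : ∀ (m : ℕ) (g : StrongDual 𝕜 X),
      g ∉ Submodule.span 𝕜 (Set.range fun k : Fin m => e k) →
      ∃ f : StrongDual 𝕜 X,
        Submodule.span 𝕜 (insert g (Set.range fun k : Fin m => e k)) =
          Submodule.span 𝕜 (insert f (Set.range fun k : Fin m => e k)) ∧
        ∀ (r : 𝕜) (rs : Fin m → 𝕜),
          ‖r • f + ∑ k : Fin m, rs k • e k‖ = ‖r‖ + ∑ k : Fin m, ‖rs k‖)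
    (n : ℕ) (f : StrongDual 𝕜 X) :
    ∃ G : Option (Fin n) → StrongDual 𝕜 X, (∀ k, G (some k) = e k) ∧ IsL1Family 𝕜 G ∧
      f ∈ Submodule.span 𝕜 (Set.range G) := by
  by_cases hf : f ∈ Submodule.span 𝕜 (Set.range fun k : Fin n => e k)
  · refine ⟨fun o => o.elim (e n) fun k => e k, fun k => rfl,
      isL1Family_option_elim_iff.2 fun r rs => ?_, ?_⟩
    · simpa [Fin.sum_univ_castSucc, add_comm] using
        isL1Family_fin_of_sum_range he (n + 1) (Fin.snoc rs r)
    · rw [Option.range_elim]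
      exact Submodule.span_mono (Set.subset_insert _ _) hf
  · obtain ⟨g, hspan, hg⟩ := hext n f hf
    refine ⟨fun o => o.elim g fun k => e k, fun k => rfl, isL1Family_option_elim_iff.2 hg, ?_⟩
    rw [Option.range_elim, ← hspan]
    exact Submodule.subset_span (Set.mem_insert _ _)

end ExtensionProperty

section DistanceToCanonicalImage

variable {𝕜 X : Type*} [RCLike 𝕜] [NormedAddCommGroup X] [NormedSpace 𝕜 X]
  {𝒰 : Ultrafilter ℕ} {e : ℕ → StrongDual 𝕜 X}

theorem one_le_norm_iteratedUltralimitDual_sub (h𝒰 : (𝒰 : Filter ℕ) ≤ atTop)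
    (he : ∀ k, ‖e k‖ ≤ 1) (G : (n : ℕ) → Option (Fin n) → StrongDual 𝕜 X)
    (hGe : ∀ n k, G n (some k) = e k) (hG : ∀ n, IsL1Family 𝕜 (G n))
    (r : (n : ℕ) → Option (Fin n) → 𝕜) {C : ℝ} (hrC : ∀ n, ∑ o, ‖r n o‖ ≤ C)
    {ψ : StrongDual 𝕜 (Ultrapower 𝕜 𝒰 X)}
    (hψ : ∀ x : BoundedSeq X,
      Tendsto (fun n => (∑ o, r n o • G n o) (x n)) 𝒰 (𝓝 (ψ (up 𝕜 𝒰 x)))) :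
    1 ≤ ‖iteratedUltralimitDual 𝒰 he - ψ‖ := by
  refine StrongDual.one_le_norm_sub fun ε hε => ?_
  have hrC' : ∀ n, ∑ k, ‖r n (some k)‖ ≤ C := fun n => by
    linarith [hrC n, Fintype.sum_option (fun o => ‖r n o‖), norm_nonneg (r n none)]
  obtain ⟨K, M, hM, hKM⟩ := exists_sum_Ico_lt_of_sum_range_le h𝒰
    (a := fun n k => ‖extendByZero (fun k => r n (some k)) k‖) (fun _ _ => norm_nonneg _)
    (fun n K => (sum_range_norm_extendByZero_le _ K).trans (hrC' n)) hε
  -- test vectors: `≈ 0` on `G n none`, `≈ 1` on `e k` for `k ∈ [K, M n)`, `≈ 0` on the other `e k`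
  set χ : ℕ → ℕ → 𝕜 := fun n k => if k ∈ Finset.Ico K (M n) then 1 else 0
  choose y hy hGy using fun n => (hG n).exists_norm_le_one_apply_near
    (τ := fun o => o.elim 0 (χ n ·))
    (by rintro (_ | k); exacts [Or.inl rfl, (ite_eq_or_eq _ _ _).symm])
    (Nat.one_div_pos_of_nat (n := n))
  set x : BoundedSeq X := ⟨y, memℓp_infty ⟨1, by rintro _ ⟨n, rfl⟩; exact hy n⟩⟩
  have hδ : Tendsto (fun n : ℕ => 1 / ((n : ℝ) + 1)) 𝒰 (𝓝 0) :=
    tendsto_one_div_add_atTop_nhds_zero_nat.mono_left h𝒰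
  refine ⟨up 𝕜 𝒰 x, (Submodule.Quotient.norm_mk_le _ x).trans
    (lp.norm_le_of_forall_le zero_le_one hy), ?_, ?_⟩
  · rw [iteratedUltralimitDual_up]
    refine iteratedUltralimit_eq_of_eventually 𝒰 he
      (((eventually_ge_atTop K).filter_mono h𝒰).mono fun k hk => ?_)
    refine tendsto_sub_nhds_zero_iff.1 (squeeze_zero_norm' ?_ hδ)
    filter_upwards [(eventually_gt_atTop k).filter_mono h𝒰, hM (k + 1)] with n hkn hkM
    change ‖e k (y n) - 1‖ ≤ _
    simpa [hGe, χ, hk, Nat.lt_of_succ_le hkM] using hGy n (some ⟨k, hkn⟩)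
  · have hbound : Tendsto (fun n : ℕ => ε + C * (1 / ((n : ℝ) + 1))) 𝒰 (𝓝 ε) := by
      simpa using (hδ.const_mul C).const_add ε
    refine le_of_tendsto_of_tendsto' (hψ x).norm hbound fun n => ?_
    have happrox := (norm_sum_smul_apply_sub_le (hGy n) (r n)).trans
      (mul_le_mul_of_nonneg_right (hrC n) (Nat.one_div_pos_of_nat (n := n)).le)
    have hwindow : ‖∑ o, r n o * o.elim 0 (χ n ·)‖ ≤ ε := by
      rw [Fintype.sum_option, Option.elim_none, mul_zero, zero_add]
      simp only [Option.elim_some]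
      rw [← sum_range_extendByZero_mul (fun k => r n (some k)) (χ n)]
      exact (norm_sum_mul_ite_mem_le _ _ _).trans (hKM n).le
    change ‖(∑ o, r n o • G n o) (y n)‖ ≤ _
    linarith [norm_sub_norm_le ((∑ o, r n o • G n o) (y n)) (∑ o, r n o * o.elim 0 (χ n ·))]

end DistanceToCanonicalImage

theorem exists_functional_distance_one_from_canonical_image_general
    (𝒰 : Ultrafilter ℕ) (h𝒰 : (𝒰 : Filter ℕ) ≤ Filter.cofinite)
    {𝕜 : Type*} [RCLike 𝕜] (X : Type*) [NormedAddCommGroup X] [NormedSpace 𝕜 X]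
    (e : ℕ → StrongDual 𝕜 X)
    (he : ∀ (m : ℕ) (r : ℕ → 𝕜),
      ‖∑ n ∈ Finset.range m, r n • e n‖ = ∑ n ∈ Finset.range m, ‖r n‖)
    (hext : ∀ (m : ℕ) (g : StrongDual 𝕜 X),
      g ∉ Submodule.span 𝕜 (Set.range fun k : Fin m => e k) →
      ∃ f : StrongDual 𝕜 X,
        Submodule.span 𝕜 (insert g (Set.range fun k : Fin m => e k)) =
          Submodule.span 𝕜 (insert f (Set.range fun k : Fin m => e k)) ∧
        ∀ (r : 𝕜) (rs : Fin m → 𝕜),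
          ‖r • f + ∑ k : Fin m, rs k • e k‖ = ‖r‖ + ∑ k : Fin m, ‖rs k‖) :
    ∃ φ : StrongDual 𝕜 (Ultrapower 𝕜 𝒰 X), ‖φ‖ = 1 ∧
      Metric.infDist φ {ψ : StrongDual 𝕜 (Ultrapower 𝕜 𝒰 X) |
        InCanonicalImage 𝕜 𝒰 ψ} = 1 := by
  have he1 (k : ℕ) : ‖e k‖ ≤ 1 := by
    simpa using ((isL1Family_fin_of_sum_range he (k + 1)).norm_eq_one (Fin.last k)).le
  have hdist (ψ : StrongDual 𝕜 (Ultrapower 𝕜 𝒰 X)) (hψ : InCanonicalImage 𝕜 𝒰 ψ) :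
      1 ≤ ‖iteratedUltralimitDual 𝒰 he1 - ψ‖ := by
    obtain ⟨f, ⟨C, hC⟩, hf⟩ := hψ
    choose G hGe hG hfG using exists_isL1Family_option_mem_span he hext
    choose r hr using fun n => (Submodule.mem_span_range_iff_exists_fun 𝕜).1 (hfG n (f n))
    refine one_le_norm_iteratedUltralimitDual_sub (Nat.cofinite_eq_atTop ▸ h𝒰) he1
      (fun n => G n (f n)) (fun n => hGe n (f n)) (fun n => hG n (f n)) r
      (fun n => by rw [← hG n (f n) (r n), hr n]; exact hC n) fun x => by simpa only [hr] using hf x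
  have h0 : InCanonicalImage 𝕜 𝒰 (0 : StrongDual 𝕜 (Ultrapower 𝕜 𝒰 X)) :=
    ⟨0, ⟨0, fun n => by simp⟩, fun x => by simp⟩
  set φ := iteratedUltralimitDual 𝒰 he1
  refine ⟨φ, le_antisymm (norm_iteratedUltralimitDual_le 𝒰 he1) (by simpa using hdist 0 h0),
    le_antisymm ?_ ((Metric.le_infDist ⟨0, h0⟩).2 fun ψ hψ => ?_)⟩
  · calc _ ≤ dist φ 0 := Metric.infDist_le_dist_of_mem h0
      _ = ‖φ‖ := (dist_eq_norm φ 0).trans (by rw [sub_zero])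
      _ ≤ 1 := norm_iteratedUltralimitDual_le 𝒰 he1
  · exact (hdist ψ hψ).trans_eq (dist_eq_norm φ ψ).symm

/-- Let `𝕜` be `ℝ` or `ℂ` and let `X` be an infinite-dimensional normed
space over `𝕜` whose dual contains an isometric copy of `ℓ¹` with the extension property:
any `x*` outside the span of `e_1*, …, e_m*` may be replaced by a vector `f*` generating
the same extended span with `‖r f* + Σ r_k e_k*‖ = |r| + Σ |r_k|`.  Then there is a
norm-one functional on `X^𝒰` at distance exactly `1` from the image of the canonical
isometry `j : (X*)^𝒰 → (X^𝒰)*`. -/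
theorem exists_functional_distance_one_from_canonical_image
    (𝒰 : Ultrafilter ℕ) (h𝒰 : (𝒰 : Filter ℕ) ≤ Filter.cofinite)
    {𝕜 : Type*} [RCLike 𝕜] (X : Type*) [NormedAddCommGroup X] [NormedSpace 𝕜 X]
    (hdim : ¬ FiniteDimensional 𝕜 X)
    (e : ℕ → StrongDual 𝕜 X)
    (he : ∀ (m : ℕ) (r : ℕ → 𝕜),
      ‖∑ n ∈ Finset.range m, r n • e n‖ = ∑ n ∈ Finset.range m, ‖r n‖)
    (hext : ∀ (m : ℕ) (g : StrongDual 𝕜 X),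
      g ∉ Submodule.span 𝕜 (Set.range fun k : Fin m => e k) →
      ∃ f : StrongDual 𝕜 X,
        Submodule.span 𝕜 (insert g (Set.range fun k : Fin m => e k)) =
          Submodule.span 𝕜 (insert f (Set.range fun k : Fin m => e k)) ∧
        ∀ (r : 𝕜) (rs : Fin m → 𝕜),
          ‖r • f + ∑ k : Fin m, rs k • e k‖ = ‖r‖ + ∑ k : Fin m, ‖rs k‖) :
    ∃ φ : StrongDual 𝕜 (Ultrapower 𝕜 𝒰 X), ‖φ‖ = 1 ∧
      Metric.infDist φ {ψ : StrongDual 𝕜 (Ultrapower 𝕜 𝒰 X) |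
        InCanonicalImage 𝕜 𝒰 ψ} = 1 :=
  exists_functional_distance_one_from_canonical_image_general 𝒰 h𝒰 X e he hext
end
end

section
/- Let 𝒰 be a nonprincipal ultrafilter on ℕ and let 1 ≤ p < ∞. Then the ultrapower (ℓ^p)^𝒰 of the space ℓ^p of p-summable complex sequences contains an isometric copy of ℓ^p(I) for an index set I of cardinality 2^ℵ₀; that is, there is a linear isometric embedding of ℓ^p(I) into (ℓ^p)^𝒰 where I has the cardinality of the continuum. -/
/-!
Ultrapowers of normed spaces along a nonprincipal ultrafilter `𝒰` on `ℕ`.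

`BoundedSeq X = ℓ∞(X)` is the normed space of bounded sequences in `X` with the sup norm,
`nullSeq 𝕜 𝒰 X = c_𝒰(X)` is the subspace of sequences whose norms tend to `0` along `𝒰`,
and `Ultrapower 𝕜 𝒰 X = ℓ∞(X)/c_𝒰(X)` is the ultrapower, with quotient map `up 𝕜 𝒰`.

The canonical linear isometry `j : (X*)^𝒰 → (X^𝒰)*` sends the class of a (bounded)
sequence of functionals `(f_n)` to the functional `(x_n)^𝒰 ↦ lim_{n→𝒰} f_n(x_n)`; hence a
functional `φ` on `X^𝒰` lies in the image of `j` if and only if there is a bounded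
sequence `(f_n)` in `X*` with `φ((x_n)^𝒰) = lim_{n→𝒰} f_n(x_n)` for every bounded
sequence `(x_n)`.  This is the predicate `InCanonicalImage` below.
-/

open Filter Topology
open scoped ENNReal

noncomputable section

variable (𝕜 : Type*) [NontriviallyNormedField 𝕜]

/-!
For `r ∈ ℝ` put `σ_r(n) = ⌊n eʳ⌋`. For `r ≠ s` the maps `σ_r, σ_s` differ at all large `n`, so
along the nonprincipal `𝒰` finitely many of the vectors `v_r = (e_{σ_r(n)})^𝒰` are represented by
disjointly supported unit vectors of `ℓ^p`, whence `‖∑ c_r v_r‖^p = ∑ |c_r|^p`. Thus `(v_r)` is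
isometrically equivalent to the unit vector basis of `ℓ^p(ℝ)`, and since the ultrapower is complete
`x ↦ ∑ x_r v_r` is a linear isometric embedding of `ℓ^p(ℝ)`.
-/

section Ultrapower

variable {𝕜} {𝒰 : Ultrafilter ℕ} {X : Type*} [NormedAddCommGroup X] [NormedSpace 𝕜 X]

instance isClosed_nullSeq : IsClosed (nullSeq 𝕜 𝒰 X : Set (BoundedSeq X)) := by
  refine isClosed_of_closure_subset fun f hf => NormedAddGroup.tendsto_nhds_zero.2 fun ε hε => ?_
  obtain ⟨g, hg, hfg⟩ := Metric.mem_closure_iff.1 hf (ε / 2) (half_pos hε)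
  filter_upwards [NormedAddGroup.tendsto_nhds_zero.1 hg (ε / 2) (half_pos hε)] with n hn
  have hfg_n : ‖f n - g n‖ ≤ dist f g := by
    rw [dist_eq_norm]
    exact lp.norm_apply_le_norm ENNReal.top_ne_zero (f - g) n
  rw [norm_norm] at hn ⊢
  calc ‖f n‖ ≤ ‖g n‖ + ‖f n - g n‖ := norm_le_insert' _ _
    _ < ε := by linarith

theorem up_eq_of_eventuallyEq {f g : BoundedSeq X} (h : ∀ᶠ n in 𝒰, f n = g n) :
    up 𝕜 𝒰 f = up 𝕜 𝒰 g := by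
  refine (Submodule.Quotient.eq _).2 (tendsto_const_nhds.congr' ?_)
  filter_upwards [h] with n hn
  simp [hn]

theorem norm_up_le_of_eventually_le {f : BoundedSeq X} {C : ℝ} (hC : 0 ≤ C)
    (h : ∀ᶠ n in 𝒰, ‖f n‖ ≤ C) : ‖up 𝕜 𝒰 f‖ ≤ C := by
  classical
  have hbound : ∀ n, ‖if ‖f n‖ ≤ C then f n else 0‖ ≤ C := fun n => by
    split_ifs with hn <;> simp [hn, hC]
  let g : BoundedSeq X := ⟨_, memℓp_infty ⟨C, Set.forall_mem_range.2 hbound⟩⟩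
  have hfg : up 𝕜 𝒰 f = up 𝕜 𝒰 g := up_eq_of_eventuallyEq <| h.mono fun n hn => by
    simp [g, hn]
  rw [hfg]
  exact (Submodule.Quotient.norm_mk_le _ g).trans (lp.norm_le_of_forall_le hC hbound)

theorem norm_up_eq_of_tendsto {f : BoundedSeq X} {L : ℝ}
    (hf : Tendsto (fun n => ‖f n‖) 𝒰 (𝓝 L)) : ‖up 𝕜 𝒰 f‖ = L := by
  have hL : 0 ≤ L := ge_of_tendsto' hf fun n => norm_nonneg _
  refine le_antisymm (le_of_forall_gt_imp_ge_of_dense fun C hC => ?_) ?_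
  · exact norm_up_le_of_eventually_le (hL.trans hC.le)
      ((hf.eventually (gt_mem_nhds hC)).mono fun n => le_of_lt)
  · refine (QuotientAddGroup.le_norm_iff).2 fun m hm => ?_
    have hmf : Tendsto (fun n => ‖(m - f) n‖) 𝒰 (𝓝 0) := (Submodule.Quotient.eq _).1 hm
    refine le_of_tendsto (by simpa using hf.sub hmf) (Eventually.of_forall fun n => ?_)
    calc ‖f n‖ - ‖(m - f) n‖ ≤ ‖m n‖ := by
          simpa [norm_sub_rev] using norm_le_insert' (f n) (m n)
      _ ≤ ‖m‖ := lp.norm_apply_le_norm ENNReal.top_ne_zero m n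

end Ultrapower

theorem Filter.eventually_injOn_of_pairwise {ι α β : Type*} {l : Filter β} {σ : ι → β → α}
    (h : Pairwise fun i j => ∀ᶠ b in l, σ i b ≠ σ j b) (F : Finset ι) :
    ∀ᶠ b in l, Set.InjOn (σ · b) F := by
  have hF : ∀ᶠ b in l, ∀ ij ∈ F.offDiag, σ ij.1 b ≠ σ ij.2 b :=
    (eventually_all_finset _).2 fun ij hij => h (Finset.mem_offDiag.1 hij).2.2
  filter_upwards [hF] with b hb i hi j hj hij
  by_contra hne
  exact hb (i, j) (Finset.mem_offDiag.2 ⟨hi, hj, hne⟩) hij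

theorem eventually_floor_mul_ne {a b : ℝ} (ha : 0 ≤ a) (hab : a < b) :
    ∀ᶠ n : ℕ in atTop, ⌊n * a⌋₊ ≠ ⌊n * b⌋₊ := by
  have hgrowth := tendsto_natCast_atTop_atTop.atTop_mul_const (sub_pos.2 hab)
  filter_upwards [hgrowth.eventually_ge_atTop 1] with n hn
  have h : ⌊n * a⌋₊ + 1 ≤ ⌊n * b⌋₊ := by
    rw [← Nat.floor_add_one (by positivity)]
    exact Nat.floor_le_floor (by linarith)
  omega

theorem pairwise_eventually_floor_mul_ne {ι : Type*} {f : ι → ℝ} (hf0 : ∀ i, 0 ≤ f i)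
    (hf : Function.Injective f) :
    Pairwise fun i j => ∀ᶠ n : ℕ in atTop, ⌊n * f i⌋₊ ≠ ⌊n * f j⌋₊ := by
  intro i j hij
  rcases (hf.ne hij).lt_or_gt with h | h
  · exact eventually_floor_mul_ne (hf0 i) h
  · exact (eventually_floor_mul_ne (hf0 j) h).mono fun n hn => hn.symm

theorem lp.norm_sum_single_comp_rpow {ι α E : Type*} [DecidableEq α] [NormedAddCommGroup E]
    {p : ℝ≥0∞} (hp : 0 < p.toReal) {σ : ι → α} {F : Finset ι} (hσ : Set.InjOn σ F) (c : ι → E) :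
    ‖∑ i ∈ F, lp.single (E := fun _ => E) p (σ i) (c i)‖ ^ p.toReal =
      ∑ i ∈ F, ‖c i‖ ^ p.toReal := by
  rcases F.eq_empty_or_nonempty with rfl | ⟨i₀, -⟩
  · simp [Real.zero_rpow hp.ne']
  have : Nonempty ι := ⟨i₀⟩
  have hinv : ∀ i ∈ F, c (Function.invFunOn σ F (σ i)) = c i := fun i hi => by
    rw [hσ.leftInvOn_invFunOn hi]
  have h := lp.norm_sum_single (E := fun _ : α => E) hp (fun a => c (Function.invFunOn σ F a))
    (F.image σ)
  rw [Finset.sum_image hσ, Finset.sum_image hσ] at h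
  convert h using 4 <;> rw [hinv _ ‹_›]

section LpIsometricFamily

variable {𝕂 ι E : Type*} [NormedField 𝕂] [NormedAddCommGroup E] [NormedSpace 𝕂 E]
  {p : ℝ≥0∞} {v : ι → E}

/-- The family `v` is isometrically equivalent to the unit vector basis of `ℓ^p(ι)`. -/
def LpIsometricFamily (𝕂 : Type*) [NormedField 𝕂] [Module 𝕂 E] (p : ℝ≥0∞) (v : ι → E) : Prop :=
  ∀ (F : Finset ι) (c : ι → 𝕂), ‖∑ i ∈ F, c i • v i‖ ^ p.toReal = ∑ i ∈ F, ‖c i‖ ^ p.toReal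

variable [CompleteSpace E]

theorem LpIsometricFamily.summable (hp : 0 < p.toReal) (hv : LpIsometricFamily 𝕂 p v)
    (x : lp (fun _ : ι => 𝕂) p) : Summable fun i => x i • v i := by
  refine summable_iff_vanishing_norm.2 fun ε hε => ?_
  obtain ⟨s, hs⟩ := summable_iff_vanishing_norm.1 ((lp.memℓp x).summable hp) (ε ^ p.toReal)
    (by positivity)
  refine ⟨s, fun t ht => ?_⟩
  have hsmall := hs t ht
  rw [Real.norm_of_nonneg (by positivity), ← hv] at hsmall
  exact (Real.rpow_lt_rpow_iff (norm_nonneg _) hε.le hp).1 hsmall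

theorem LpIsometricFamily.norm_tsum (hp : 0 < p.toReal) (hv : LpIsometricFamily 𝕂 p v)
    (x : lp (fun _ : ι => 𝕂) p) : ‖∑' i, x i • v i‖ = ‖x‖ := by
  have hpartial : HasSum (fun i => ‖x i‖ ^ p.toReal) (‖∑' i, x i • v i‖ ^ p.toReal) := by
    have h := (hv.summable hp x).hasSum.norm.rpow_const (p := p.toReal) (Or.inr hp.le)
    rwa [funext fun F => hv F x] at h
  exact (Real.rpow_left_inj (norm_nonneg _) (lp.norm_nonneg' x) hp.ne').1
    (hpartial.unique (lp.hasSum_norm hp x))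

def LpIsometricFamily.linearIsometry [Fact (1 ≤ p)] (hp : 0 < p.toReal)
    (hv : LpIsometricFamily 𝕂 p v) :
    lp (fun _ : ι => 𝕂) p →ₗᵢ[𝕂] E where
  toFun x := ∑' i, x i • v i
  map_add' x y := by
    simp only [lp.coeFn_add, Pi.add_apply, add_smul]
    exact (hv.summable hp x).tsum_add (hv.summable hp y)
  map_smul' c x := by
    simp only [lp.coeFn_smul, Pi.smul_apply, smul_eq_mul, mul_smul, RingHom.id_apply]
    exact (hv.summable hp x).tsum_const_smul c
  norm_map' := hv.norm_tsum hp

end LpIsometricFamily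

section UnitVectorSeq

variable {α ι : Type*} [DecidableEq α] (p : ℝ≥0∞) [Fact (1 ≤ p)]

def unitVectorSeq (σ : ℕ → α) : BoundedSeq (lp (fun _ : α => 𝕜) p) :=
  ⟨fun n => lp.single p (σ n) 1, memℓp_infty ⟨1, Set.forall_mem_range.2 fun n => by
    simp [lp.norm_single (zero_lt_one.trans_le Fact.out)]⟩⟩

@[simp]
theorem unitVectorSeq_apply (σ : ℕ → α) (n : ℕ) :
    unitVectorSeq 𝕜 p σ n = lp.single p (σ n) 1 :=
  rfl

theorem lpIsometricFamily_up_unitVectorSeq (hp : 0 < p.toReal) {𝒰 : Ultrafilter ℕ}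
    {σ : ι → ℕ → α} (hσ : ∀ F : Finset ι, ∀ᶠ n in 𝒰, Set.InjOn (σ · n) F) :
    LpIsometricFamily 𝕜 p fun i => up 𝕜 𝒰 (unitVectorSeq 𝕜 p (σ i)) := by
  intro F c
  have hsum : ∑ i ∈ F, c i • up 𝕜 𝒰 (unitVectorSeq 𝕜 p (σ i)) =
      up 𝕜 𝒰 (∑ i ∈ F, c i • unitVectorSeq 𝕜 p (σ i)) := by
    change _ = (nullSeq 𝕜 𝒰 _).mkQ _
    simp only [map_sum, map_smul]
    rfl
  have hcoord : ∀ n, (∑ i ∈ F, c i • unitVectorSeq 𝕜 p (σ i)) n =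
      ∑ i ∈ F, lp.single p (σ i n) (c i) := fun n => by
    simp only [lp.coeFn_sum, Finset.sum_apply, lp.coeFn_smul, Pi.smul_apply, unitVectorSeq_apply,
      ← lp.single_smul, smul_eq_mul, mul_one]
  have hS : 0 ≤ ∑ i ∈ F, ‖c i‖ ^ p.toReal := by positivity
  rw [hsum, norm_up_eq_of_tendsto (L := (∑ i ∈ F, ‖c i‖ ^ p.toReal) ^ p.toReal⁻¹),
    Real.rpow_inv_rpow hS hp.ne']
  refine tendsto_const_nhds.congr' ((hσ F).mono fun n hn => ?_)
  dsimp only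
  rw [hcoord n, ← lp.norm_sum_single_comp_rpow hp hn c, Real.rpow_rpow_inv (norm_nonneg _) hp.ne']

end UnitVectorSeq

/-- For `1 ≤ p < ∞`, the ultrapower `(ℓ^p)^𝒰` contains an isometric
copy of `ℓ^p(I)` for an index set `I` of cardinality `2^ℵ₀`. -/
theorem ultrapower_lp_contains_lp_continuum
    (𝒰 : Ultrafilter ℕ) (h𝒰 : (𝒰 : Filter ℕ) ≤ Filter.cofinite)
    (p : ℝ≥0∞) [Fact (1 ≤ p)] (hp : p ≠ ∞) :
    ∃ (I : Type) (_ : Cardinal.mk I = (2 : Cardinal) ^ Cardinal.aleph0),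
      Nonempty (lp (fun _ : I => ℂ) p →ₗᵢ[ℂ]
        Ultrapower ℂ 𝒰 (lp (fun _ : ℕ => ℂ) p)) := by
  have hp' : 0 < p.toReal := ENNReal.toReal_pos (zero_lt_one.trans_le Fact.out).ne' hp
  let σ : ℝ → ℕ → ℕ := fun r n => ⌊n * Real.exp r⌋₊
  have hσ : ∀ F : Finset ℝ, ∀ᶠ n in 𝒰, Set.InjOn (σ · n) F := fun F =>
    (eventually_injOn_of_pairwise
      (pairwise_eventually_floor_mul_ne Real.exp_nonneg Real.exp_injective) F).filter_mono
      (h𝒰.trans Nat.cofinite_eq_atTop.le)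
  exact ⟨ℝ, Cardinal.mk_real.trans Cardinal.two_power_aleph0.symm,
    ⟨(lpIsometricFamily_up_unitVectorSeq ℂ p hp' hσ).linearIsometry hp'⟩⟩
end
end

section
/- In the Pedersen–Petersen C*-algebra 𝔓₁, the element P₁ − Q₁ is a self-adjoint commutator but not a *-commutator: there exist X, Y ∈ 𝔓₁ with XY − YX = P₁ − Q₁, while there is no a ∈ 𝔓₁ with a a* − a* a = P₁ − Q₁. In particular 𝔠*(𝔓₁) is a proper subset of 𝔠(𝔓₁)_sa. -/
/-!
The Pedersen–Petersen C*-algebra `𝔓_n` is realised as the subset (sub-C*-algebra)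
`ppSet n` of `C(S^{2n+1}, M₂)` consisting of the continuous functions `F` with
`F(λe) = diag(1,λ)·F(e)·diag(1,λ̄)` for every unit scalar `λ`; this is the algebra of
continuous sections of the Pedersen–Petersen bundle `B_n` over `ℂP^n`.
Here `M₂` carries the (L²-)operator norm, and `C(S^{2n+1}, M₂)` the sup norm.
-/

open scoped Matrix.Norms.L2Operator

noncomputable section

/-- The sphere `S^{2n+1}`: unit vectors of `ℂ^{n+1}`. -/
abbrev PPSphere (n : ℕ) := Metric.sphere (0 : EuclideanSpace ℂ (Fin (n + 1))) 1

/-- 2×2 complex matrices. -/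
abbrev M₂ := Matrix (Fin 2) (Fin 2) ℂ

/-- Scalar multiplication of a point of the sphere by a modulus-one complex number. -/
def circleSMul {n : ℕ} (l : ℂ) (hl : ‖l‖ = 1) (e : PPSphere n) : PPSphere n :=
  ⟨l • (e : EuclideanSpace ℂ (Fin (n + 1))), by
    have he : ‖(e : EuclideanSpace ℂ (Fin (n + 1)))‖ = 1 := by
      simpa using mem_sphere_zero_iff_norm.mp e.2
    simp [mem_sphere_zero_iff_norm, norm_smul, hl, he]⟩

/-- The diagonal matrix `diag(1, l)`. -/
def ppDiag (l : ℂ) : M₂ := Matrix.diagonal ![1, l]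

/-- The Pedersen–Petersen C*-algebra `𝔓_n`, as the subset of `C(S^{2n+1}, M₂)` of
functions satisfying the equivariance condition `F(λe) = diag(1,λ)·F(e)·diag(1,λ̄)`. -/
def ppSet (n : ℕ) : Set C(PPSphere n, M₂) :=
  {F | ∀ (e : PPSphere n) (l : ℂ) (hl : ‖l‖ = 1),
    F (circleSMul l hl e) = ppDiag l * F e * ppDiag (starRingEnd ℂ l)}

/-- The constant function `P_n = diag(1,0) ∈ 𝔓_n`. -/
def ppP (n : ℕ) : C(PPSphere n, M₂) := ContinuousMap.const _ (Matrix.diagonal ![1, 0])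

/-- The constant function `Q_n = diag(0,1) ∈ 𝔓_n`. -/
def ppQ (n : ℕ) : C(PPSphere n, M₂) := ContinuousMap.const _ (Matrix.diagonal ![0, 1])

/-!
The off-diagonal sections `X(z, w) = !![0, z̄; w, 0]` and `Y(z, w) = !![0, -w̄; z, 0]` of `𝔓₁`
satisfy `XY - YX = diag(|z|² + |w|², -(|z|² + |w|²)) = P₁ - Q₁`.

If instead `aa* - a*a = P₁ - Q₁`, the `(0, 0)` entry reads `|a₀₁|² - |a₁₀|² = 1`, so the entry
`a₀₁` vanishes nowhere on `S³`. Equivariance gives `a₀₁(λe) = λ̄ a₀₁(e)`, so on the circle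
`λ ↦ (λ, 0)` the function `a₀₁` is a loop of winding number `-1` in `ℂ \ {0}`. That circle bounds
a disc in `S³` (through the pole `(0, 1)`), so the loop would be null-homotopic, which lifting
through `exp` rules out.
-/

open Complex ComplexConjugate
open scoped Real

theorem star_ppDiag (l : ℂ) : star (ppDiag l) = ppDiag (conj l) := by
  ext i j
  fin_cases i <;> fin_cases j <;> simp [ppDiag]

theorem star_mem_ppSet {n : ℕ} {a : C(PPSphere n, M₂)} (ha : a ∈ ppSet n) :
    star a ∈ ppSet n := by
  intro e l hl
  rw [ContinuousMap.star_apply, ContinuousMap.star_apply, ha e l hl, star_mul, star_mul,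
    star_ppDiag, star_ppDiag, conj_conj, mul_assoc]

theorem ppP_sub_ppQ_apply {n : ℕ} (e : PPSphere n) :
    (ppP n - ppQ n) e = Matrix.diagonal ![1, -1] := by
  ext i j
  fin_cases i <;> fin_cases j <;> simp [ppP, ppQ]

theorem isSelfAdjoint_ppP_sub_ppQ (n : ℕ) : IsSelfAdjoint (ppP n - ppQ n) := by
  ext1 e
  rw [ContinuousMap.star_apply, ppP_sub_ppQ_apply]
  ext i j
  fin_cases i <;> fin_cases j <;> simp

def offDiagMap {X : Type*} [TopologicalSpace X] (β γ : C(X, ℂ)) : C(X, M₂) :=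
  ⟨fun x => !![0, β x; γ x, 0], by fun_prop⟩

theorem offDiagMap_mem_ppSet {n : ℕ} {β γ : C(PPSphere n, ℂ)}
    (hβ : ∀ e l (hl : ‖l‖ = 1), β (circleSMul l hl e) = conj l * β e)
    (hγ : ∀ e l (hl : ‖l‖ = 1), γ (circleSMul l hl e) = l * γ e) :
    offDiagMap β γ ∈ ppSet n := by
  intro e l hl
  ext i j
  fin_cases i <;> fin_cases j <;> simp [offDiagMap, ppDiag, hβ, hγ, mul_comm]

theorem offDiagMap_commutator_apply {X : Type*} [TopologicalSpace X] (β γ β' γ' : C(X, ℂ))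
    (x : X) : (offDiagMap β γ * offDiagMap β' γ' - offDiagMap β' γ' * offDiagMap β γ) x =
      Matrix.diagonal ![β x * γ' x - β' x * γ x, γ x * β' x - γ' x * β x] := by
  ext i j
  fin_cases i <;> fin_cases j <;> simp [offDiagMap]

def sphereCoord {n : ℕ} (i : Fin (n + 1)) : C(PPSphere n, ℂ) :=
  ⟨fun e => (e : EuclideanSpace ℂ (Fin (n + 1))) i, by fun_prop⟩

theorem sphereCoord_circleSMul {n : ℕ} (i : Fin (n + 1)) (e : PPSphere n) (l : ℂ)
    (hl : ‖l‖ = 1) : sphereCoord i (circleSMul l hl e) = l * sphereCoord i e := rfl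

theorem sum_conj_sphereCoord_mul {n : ℕ} (e : PPSphere n) :
    ∑ i, conj (sphereCoord i e) * sphereCoord i e = 1 := by
  have h := inner_self_eq_norm_sq_to_K (𝕜 := ℂ) (e : EuclideanSpace ℂ (Fin (n + 1)))
  rw [mem_sphere_zero_iff_norm.mp e.2, PiLp.inner_apply] at h
  simpa [sphereCoord, conj_mul'] using h

theorem exists_commutator_eq_ppP_sub_ppQ :
    ∃ X Y : C(PPSphere 1, M₂), X ∈ ppSet 1 ∧ Y ∈ ppSet 1 ∧ X * Y - Y * X = ppP 1 - ppQ 1 := by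
  refine ⟨offDiagMap (star (sphereCoord 0)) (sphereCoord 1),
    offDiagMap (-star (sphereCoord 1)) (sphereCoord 0), offDiagMap_mem_ppSet ?_ ?_,
    offDiagMap_mem_ppSet ?_ ?_, ?_⟩
  · exact fun e l hl => by simp [sphereCoord_circleSMul]
  · exact sphereCoord_circleSMul 1
  · exact fun e l hl => by simp [sphereCoord_circleSMul]
  · exact sphereCoord_circleSMul 0
  · ext1 e
    have h := sum_conj_sphereCoord_mul e
    rw [Fin.sum_univ_two] at h
    rw [offDiagMap_commutator_apply, ppP_sub_ppQ_apply]
    simp only [ContinuousMap.star_apply, ContinuousMap.neg_apply, RCLike.star_def]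
    congr 1
    ext i
    fin_cases i
    · simp only [Fin.zero_eta, Matrix.cons_val_zero]
      linear_combination h
    · simp only [Fin.mk_one, Matrix.cons_val_one, Matrix.cons_val_fin_one]
      linear_combination -h

theorem Complex.eq_of_forall_exp_eq {X : Type*} [TopologicalSpace X] [PreconnectedSpace X]
    {f g : X → ℂ} (hf : Continuous f) (hg : Continuous g) (he : ∀ x, exp (f x) = exp (g x))
    {x₀ : X} (h₀ : f x₀ = g x₀) : f = g :=
  isCoveringMap_exp.eq_of_comp_eq hf hg (funext fun x => Subtype.ext (he x)) x₀ h₀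

theorem Complex.exists_continuous_exp_eq {X : Type*} [TopologicalSpace X]
    [SimplyConnectedSpace X] [LocallyPathConnectedSpace X] {G : X → ℂ} (hG : Continuous G)
    (hG₀ : ∀ x, G x ≠ 0) : ∃ L : X → ℂ, Continuous L ∧ ∀ x, exp (L x) = G x := by
  obtain ⟨x₀⟩ := (inferInstance : Nonempty X)
  obtain ⟨L, ⟨-, hL⟩, -⟩ := isCoveringMapOn_exp.existsUnique_continuousMap_lifts
    ⟨G, hG⟩ (exp_log (hG₀ x₀)) hG₀
  exact ⟨L, L.continuous, congrFun hL⟩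

/-- Lift `G` through `exp`: over one period the lift increases by `2πik` on the bottom edge, by `0`
on the top edge, and by an amount that does not depend on `s`. -/
theorem Complex.eq_zero_of_homotopy_exp_loop_const {G : ℝ × ℝ → ℂ} (hG : Continuous G)
    (hG₀ : ∀ p, G p ≠ 0) {k : ℝ} {c : ℂ} (hbot : ∀ t : ℝ, G (t, 0) = exp (k * t * I) * c)
    (htop : ∀ t, G (t, 1) = G (0, 1)) (hloop : ∀ s, G (2 * π, s) = G (0, s)) : k = 0 := by
  obtain ⟨L, hL, hLG⟩ := exists_continuous_exp_eq hG hG₀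
  have hliftBot : (fun t : ℝ => L (t, 0)) = fun t : ℝ => L (0, 0) + k * t * I := by
    refine eq_of_forall_exp_eq (by fun_prop) (by fun_prop) (fun t => ?_) (x₀ := 0) (by simp)
    rw [exp_add, hLG, hLG, hbot, hbot]
    simp [mul_comm]
  have hliftTop : L (2 * π, 1) = L (0, 1) :=
    congrFun (eq_of_forall_exp_eq (f := fun t : ℝ => L (t, 1)) (g := fun _ => L (0, 1))
      (by fun_prop) (by fun_prop) (fun t => by simp only [hLG, htop]) (x₀ := 0) rfl) (2 * π)
  have hliftSide : (fun s : ℝ => L (2 * π, s)) = fun s => L (0, s) :=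
    eq_of_forall_exp_eq (by fun_prop) (by fun_prop) (fun s => by rw [hLG, hLG, hloop]) hliftTop
  have hwind : (k : ℂ) * (2 * π) * I = 0 := by
    have h := congrFun hliftBot (2 * π)
    simp only [congrFun hliftSide 0] at h
    push_cast at h
    linear_combination -h
  simpa [Real.pi_ne_zero, I_ne_zero] using hwind

theorem norm_exp_mul_cos_add_sin (t θ : ℝ) :
    ‖(!₂[exp (t * I) * Real.cos θ, Real.sin θ] : EuclideanSpace ℂ (Fin 2))‖ = 1 := by
  rw [EuclideanSpace.norm_eq, Fin.sum_univ_two]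
  simp only [Matrix.cons_val_zero, Matrix.cons_val_one, norm_mul,
    norm_exp_ofReal_mul_I, one_mul, norm_real, Real.norm_eq_abs, sq_abs, Real.cos_sq_add_sin_sq,
    Real.sqrt_one]

def sphereContraction (p : ℝ × ℝ) : PPSphere 1 :=
  ⟨!₂[exp (p.1 * I) * Real.cos (π / 2 * p.2), Real.sin (π / 2 * p.2)],
    mem_sphere_zero_iff_norm.mpr (norm_exp_mul_cos_add_sin _ _)⟩

theorem continuous_sphereContraction : Continuous sphereContraction := by
  unfold sphereContraction
  fun_prop

def sphereBasePoint : PPSphere 1 := ⟨!₂[1, 0], by simp [EuclideanSpace.norm_eq]⟩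

theorem sphereContraction_zero (t : ℝ) :
    sphereContraction (t, 0) =
      circleSMul (exp (t * I)) (norm_exp_ofReal_mul_I t) sphereBasePoint := by
  ext i
  fin_cases i <;> simp [sphereContraction, sphereBasePoint, circleSMul]

theorem sphereContraction_one (t : ℝ) : sphereContraction (t, 1) = sphereContraction (0, 1) := by
  ext i
  fin_cases i <;> simp [sphereContraction]

theorem sphereContraction_two_pi (s : ℝ) :
    sphereContraction (2 * π, s) = sphereContraction (0, s) := by
  ext i
  fin_cases i <;> simp [sphereContraction]

theorem exists_eq_zero_of_map_circleSMul_eq_conj_mul {g : PPSphere 1 → ℂ} (hg : Continuous g)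
    (hequiv : ∀ e l (hl : ‖l‖ = 1), g (circleSMul l hl e) = conj l * g e) : ∃ e, g e = 0 := by
  by_contra! hg₀
  have hbot (t : ℝ) :
      g (sphereContraction (t, 0)) = exp ((-1 : ℝ) * t * I) * g sphereBasePoint := by
    rw [sphereContraction_zero, hequiv, ← exp_conj]
    simp
  have := eq_zero_of_homotopy_exp_loop_const (hg.comp continuous_sphereContraction)
    (fun p => hg₀ _) hbot (fun t => by simp only [Function.comp_apply, sphereContraction_one])
    (fun s => by simp only [Function.comp_apply, sphereContraction_two_pi])
  norm_num at this

theorem apply_circleSMul_zero_one {n : ℕ} {a : C(PPSphere n, M₂)} (ha : a ∈ ppSet n)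
    (e : PPSphere n) (l : ℂ) (hl : ‖l‖ = 1) : a (circleSMul l hl e) 0 1 = conj l * a e 0 1 := by
  simp [ha e l hl, ppDiag, mul_comm]

theorem Matrix.apply_zero_one_ne_zero_of_mul_star_sub_star_mul_eq {A : Matrix (Fin 2) (Fin 2) ℂ}
    (h : A * star A - star A * A = Matrix.diagonal ![1, -1]) : A 0 1 ≠ 0 := by
  intro h01
  have h00 := congrFun (congrFun h 0) 0
  simp only [Matrix.sub_apply, Matrix.mul_apply, Fin.sum_univ_two, Matrix.star_apply, h01,
    star_def, mul_conj', conj_mul', Matrix.diagonal_apply_eq, Matrix.cons_val_zero, norm_zero,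
    ofReal_zero] at h00
  have h10 : ((‖A 1 0‖ ^ 2 : ℝ) : ℂ) = -1 := by push_cast; linear_combination -h00
  have hnorm : ‖A 1 0‖ ^ 2 = -1 := mod_cast h10
  nlinarith [sq_nonneg ‖A 1 0‖]

theorem not_exists_star_commutator_eq_ppP_sub_ppQ :
    ¬ ∃ a ∈ ppSet 1, a * star a - star a * a = ppP 1 - ppQ 1 := by
  rintro ⟨a, ha, hcomm⟩
  obtain ⟨e, he⟩ := exists_eq_zero_of_map_circleSMul_eq_conj_mul (g := fun e => a e 0 1)
    (by fun_prop) (apply_circleSMul_zero_one ha)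
  refine Matrix.apply_zero_one_ne_zero_of_mul_star_sub_star_mul_eq ?_ he
  simpa [← ppP_sub_ppQ_apply e] using congr($hcomm e)

/-- **Statement 15.** In `𝔓₁`, the element `P₁ − Q₁` is a self-adjoint commutator but not
a *-commutator; in particular the set `𝔠*(𝔓₁)` of *-commutators is a proper subset of the
set `𝔠(𝔓₁)_sa` of self-adjoint commutators. -/
theorem selfAdjoint_commutator_not_star_commutator_in_PP_one :
    (∃ X Y : C(PPSphere 1, M₂), X ∈ ppSet 1 ∧ Y ∈ ppSet 1 ∧
        X * Y - Y * X = ppP 1 - ppQ 1) ∧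
    (¬ ∃ a : C(PPSphere 1, M₂), a ∈ ppSet 1 ∧
        a * star a - star a * a = ppP 1 - ppQ 1) ∧
    {T : C(PPSphere 1, M₂) | ∃ a ∈ ppSet 1, T = a * star a - star a * a} ⊂
      {T : C(PPSphere 1, M₂) |
        (∃ a ∈ ppSet 1, ∃ b ∈ ppSet 1, T = a * b - b * a) ∧ star T = T} := by
  obtain ⟨X, Y, hX, hY, hXY⟩ := exists_commutator_eq_ppP_sub_ppQ
  refine ⟨⟨X, Y, hX, hY, hXY⟩, not_exists_star_commutator_eq_ppP_sub_ppQ,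
    ssubset_of_subset_not_subset ?_ fun hsub => ?_⟩
  · rintro _ ⟨a, ha, rfl⟩
    exact ⟨⟨a, ha, star a, star_mem_ppSet ha, rfl⟩, by simp [star_sub]⟩
  · obtain ⟨a, ha, hPQ⟩ := hsub ⟨⟨X, hX, Y, hY, hXY.symm⟩, isSelfAdjoint_ppP_sub_ppQ 1⟩
    exact not_exists_star_commutator_eq_ppP_sub_ppQ ⟨a, ha, hPQ.symm⟩
end
end

section
/- Let A be a C*-algebra and let x, y ∈ A be such that the commutator xy − yx is self-adjoint. Then there exist a, b ∈ A with xy − yx = (a a* − a* a) + (b b* − b* b); that is, every self-adjoint commutator in a C*-algebra is a sum of two *-commutators. -/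
/-- In a C*-algebra, every self-adjoint commutator is the sum of two
*-commutators: if `xy − yx` is self-adjoint then `xy − yx = (aa* − a*a) + (bb* − b*b)`
for some `a, b`. -/
theorem selfAdjoint_commutator_eq_sum_two_star_commutators
    (A : Type*) [NonUnitalCStarAlgebra A] (x y : A)
    (h : star (x * y - y * x) = x * y - y * x) :
    ∃ a b : A,
      x * y - y * x = (a * star a - star a * a) + (b * star b - star b * b) := by
  have h' : star y * star x = star x * star y + (x * y - y * x) := by
    simp only [star_sub, star_mul] at h
    linear_combination (norm := noncomm_ring) h
  refine ⟨x + ((1:ℂ)/2) • star y, star x + (Complex.I/2) • y, ?_⟩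
  simp only [star_add, star_smul, star_star, map_div₀, Complex.conj_I, map_one,
    map_ofNat, mul_add, add_mul, smul_mul_assoc, mul_smul_comm, smul_smul]
  rw [h']
  match_scalars <;> simp [Complex.ext_iff] <;> norm_num
end

section
/- Let 𝒰 be a nonprincipal ultrafilter on ℕ and let X be a normed space over ℂ into which there is a linear isometric embedding of c₀ (the space of complex sequences converging to 0, with the sup norm). Then there is a linear isometric embedding of ℓ∞ (the space of bounded complex sequences, with the sup norm) into the ultrapower X^𝒰. -/
/-!
Ultrapowers of normed spaces along a nonprincipal ultrafilter `𝒰` on `ℕ`.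

`BoundedSeq X = ℓ∞(X)` is the normed space of bounded sequences in `X` with the sup norm,
`nullSeq 𝕜 𝒰 X = c_𝒰(X)` is the subspace of sequences whose norms tend to `0` along `𝒰`,
and `Ultrapower 𝕜 𝒰 X = ℓ∞(X)/c_𝒰(X)` is the ultrapower, with quotient map `up 𝕜 𝒰`.

The canonical linear isometry `j : (X*)^𝒰 → (X^𝒰)*` sends the class of a (bounded)
sequence of functionals `(f_n)` to the functional `(x_n)^𝒰 ↦ lim_{n→𝒰} f_n(x_n)`; hence a
functional `φ` on `X^𝒰` lies in the image of `j` if and only if there is a bounded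
sequence `(f_n)` in `X*` with `φ((x_n)^𝒰) = lim_{n→𝒰} f_n(x_n)` for every bounded
sequence `(x_n)`.  This is the predicate `InCanonicalImage` below.
-/

open Filter Topology
open scoped ENNReal

noncomputable section

variable (𝕜 : Type*) [NontriviallyNormedField 𝕜]

open scoped ZeroAtInfty

/-! If `T : c₀ → X` is a linear isometry, send `a ∈ ℓ∞` to the class of the sequence
`(T (a · 1_{[0, n]}))_n`. Every term has norm at most `‖a‖`, and for each `k` all terms with
`n ≥ k` have norm at least `‖a k‖`; as `𝒰` is nonprincipal these `n` form a set in `𝒰`, so the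
ultrapower norm of the class is exactly `sup_k ‖a k‖ = ‖a‖`. -/

section Truncation

variable {E : Type*} [NormedAddCommGroup E] [NormedSpace 𝕜 E]

def truncateC₀ (n : ℕ) : lp (fun _ : ℕ => E) ∞ →ₗ[𝕜] C₀(ℕ, E) where
  toFun a :=
    { toFun := fun k => if k ≤ n then a k else 0
      continuous_toFun := continuous_of_discreteTopology
      zero_at_infty' := by
        rw [cocompact_eq_atTop]
        refine tendsto_const_nhds.congr' ?_
        filter_upwards [eventually_gt_atTop n] with k hk
        simp [Nat.not_le_of_gt hk] }
  map_add' a b := by ext k; by_cases hk : k ≤ n <;> simp [hk]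
  map_smul' c a := by ext k; by_cases hk : k ≤ n <;> simp [hk]

variable {𝕜}

theorem truncateC₀_apply (n k : ℕ) (a : lp (fun _ : ℕ => E) ∞) :
    truncateC₀ 𝕜 n a k = if k ≤ n then a k else 0 := rfl

theorem norm_truncateC₀_le (n : ℕ) (a : lp (fun _ : ℕ => E) ∞) : ‖truncateC₀ 𝕜 n a‖ ≤ ‖a‖ := by
  rw [← ZeroAtInftyContinuousMap.norm_toBCF_eq_norm]
  refine (BoundedContinuousFunction.norm_le (norm_nonneg a)).2 fun k => ?_
  change ‖truncateC₀ 𝕜 n a k‖ ≤ ‖a‖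
  rw [truncateC₀_apply]
  split_ifs
  · exact lp.norm_apply_le_norm ENNReal.top_ne_zero a k
  · simp

theorem norm_apply_le_norm_truncateC₀ {n k : ℕ} (hk : k ≤ n) (a : lp (fun _ : ℕ => E) ∞) :
    ‖a k‖ ≤ ‖truncateC₀ 𝕜 n a‖ := by
  simpa [truncateC₀_apply, hk] using (truncateC₀ 𝕜 n a).toBCF.norm_coe_le_norm k

variable {X : Type*} [NormedAddCommGroup X] [NormedSpace 𝕜 X]

def truncSeq (T : C₀(ℕ, E) →ₗᵢ[𝕜] X) : lp (fun _ : ℕ => E) ∞ →ₗ[𝕜] BoundedSeq X where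
  toFun a := ⟨fun n => T (truncateC₀ 𝕜 n a), memℓp_infty ⟨‖a‖, by
    rintro - ⟨n, rfl⟩
    simpa using norm_truncateC₀_le n a⟩⟩
  map_add' a b := by ext n; exact congrArg T (map_add _ a b) |>.trans (map_add T _ _)
  map_smul' c a := by ext n; exact congrArg T (map_smul _ c a) |>.trans (map_smul T _ _)

theorem truncSeq_apply (T : C₀(ℕ, E) →ₗᵢ[𝕜] X) (a : lp (fun _ : ℕ => E) ∞) (n : ℕ) :
    truncSeq T a n = T (truncateC₀ 𝕜 n a) := rfl

theorem norm_truncSeq_le (T : C₀(ℕ, E) →ₗᵢ[𝕜] X) (a : lp (fun _ : ℕ => E) ∞) :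
    ‖truncSeq T a‖ ≤ ‖a‖ :=
  lp.norm_le_of_forall_le (norm_nonneg a) fun n => by
    simpa [truncSeq_apply] using norm_truncateC₀_le n a

end Truncation

section Ultrapower

variable {𝕜} {𝒰 : Ultrafilter ℕ} {X : Type*} [NormedAddCommGroup X] [NormedSpace 𝕜 X]

theorem le_norm_up_of_eventually_le {x : BoundedSeq X} {c : ℝ}
    (hc : ∀ᶠ n in (𝒰 : Filter ℕ), c ≤ ‖x n‖) : c ≤ ‖up 𝕜 𝒰 x‖ := by
  refine QuotientAddGroup.le_norm_iff.2 fun y hy => ?_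
  have hnull : Tendsto (fun n => ‖(y - x) n‖) 𝒰 (𝓝 0) :=
    (Submodule.Quotient.eq (nullSeq 𝕜 𝒰 X)).1 hy
  refine le_of_tendsto (by simpa using tendsto_const_nhds.sub hnull) ?_
  filter_upwards [hc] with n hn
  calc c - ‖(y - x) n‖ ≤ ‖x n‖ - ‖y n - x n‖ := sub_le_sub_right hn _
    _ ≤ ‖y n‖ := sub_le_iff_le_add.2 (norm_le_norm_add_norm_sub (y n) (x n))
    _ ≤ ‖y‖ := lp.norm_apply_le_norm ENNReal.top_ne_zero y n

end Ultrapower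

/-- **Statement 19.** If a normed space `X` over `ℂ` contains an isometric copy of `c₀`
(the space `C₀(ℕ, ℂ)` of complex sequences converging to `0`, with the sup norm), then the
ultrapower `X^𝒰` contains an isometric copy of `ℓ∞` (the bounded complex sequences with
the sup norm). -/
theorem ultrapower_contains_ell_infty_of_c0
    (𝒰 : Ultrafilter ℕ) (h𝒰 : (𝒰 : Filter ℕ) ≤ Filter.cofinite)
    (X : Type*) [NormedAddCommGroup X] [NormedSpace ℂ X]
    (hc0 : Nonempty (C₀(ℕ, ℂ) →ₗᵢ[ℂ] X)) :
    Nonempty ((lp (fun _ : ℕ => ℂ) ∞) →ₗᵢ[ℂ] Ultrapower ℂ 𝒰 X) := by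
  obtain ⟨T⟩ := hc0
  refine ⟨⟨(nullSeq ℂ 𝒰 X).mkQ ∘ₗ truncSeq T, fun a => le_antisymm ?_ ?_⟩⟩
  · exact (Submodule.Quotient.norm_mk_le _ _).trans (norm_truncSeq_le T a)
  · refine lp.norm_le_of_forall_le (norm_nonneg _) fun k => le_norm_up_of_eventually_le ?_
    have hk : ∀ᶠ n in (𝒰 : Filter ℕ), k ≤ n :=
      h𝒰.trans_eq Nat.cofinite_eq_atTop (eventually_ge_atTop k)
    filter_upwards [hk] with n hn
    rw [truncSeq_apply, T.norm_map]
    exact norm_apply_le_norm_truncateC₀ hn a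
end
end
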